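/- arXiv:gr-qc/0102047 — 3 statements merged into one kernel-verified Lean document; each statement's English description precedes it below -/
import Mathlib

section
/- Let m ∈ ℕ, s ∈ ℤ, and let p ∈ 𝒫_m be a homogeneous polynomial of degree m on ℝ³. Then for every x ∈ ℝ³ with x ≠ 0, Δ(‖x‖^s p(x)) = ‖x‖^{s−2} ( s(s+1+2m) p(x) + ‖x‖² (Δp)(x) ). -/
/-!
By the product rule, `Δ(f p) = (Δf) p + 2 ∇f · ∇p + f Δp`. For `f = ‖x‖^s` on `ℝ³ \ {0}` one has
`∇f = s ‖x‖^(s-2) x` and `Δf = s (s - 2) ‖x‖^(s-2) + 3 s ‖x‖^(s-2) = s (s + 1) ‖x‖^(s-2)`, while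
Euler's identity `x · ∇p = m p` for a homogeneous `p` of degree `m` turns the middle term into
`2 s m ‖x‖^(s-2) p`.
-/

noncomputable section

/-- ℝ³ with the Euclidean norm. -/
abbrev E3 := EuclideanSpace ℝ (Fin 3)

/-- The `i`-th partial derivative of a function on ℝ³. -/
def pd (i : Fin 3) (f : E3 → ℝ) : E3 → ℝ :=
  fun x => fderiv ℝ f x (EuclideanSpace.single i 1)

/-- The flat Laplacian on ℝ³. -/
def lap (f : E3 → ℝ) : E3 → ℝ :=
  fun x => ∑ i : Fin 3, pd i (pd i f) x

/-- `p : ℝ³ → ℝ` is (the evaluation of) a homogeneous polynomial of degree `m`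
in the three coordinates. -/
def IsHomogPoly (m : ℕ) (p : E3 → ℝ) : Prop :=
  ∃ P : MvPolynomial (Fin 3) ℝ, P.IsHomogeneous m ∧
    ∀ x : E3, p x = MvPolynomial.eval (fun i => x i) P

open MvPolynomial Filter Topology

theorem MvPolynomial.IsHomogeneous.eval_smul {σ R : Type*} [Fintype σ] [CommSemiring R]
    {P : MvPolynomial σ R} {m : ℕ} (hP : P.IsHomogeneous m) (t : R) (x : σ → R) :
    eval (t • x) P = t ^ m * eval x P := by
  rw [eval_eq', eval_eq', Finset.mul_sum]
  refine Finset.sum_congr rfl fun d hd => ?_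
  have hdeg : ∑ i, d i = m := by
    rw [← hP (mem_support_iff.mp hd), Finsupp.weight_apply, Finsupp.sum_fintype _ _ (by simp)]
    simp
  simp only [Pi.smul_apply, smul_eq_mul, mul_pow, Finset.prod_mul_distrib,
    Finset.prod_pow_eq_pow_sum, hdeg]
  ring

theorem fderiv_apply_self_of_map_smul_eq_pow_mul {E : Type*} [NormedAddCommGroup E]
    [NormedSpace ℝ E] {f : E → ℝ} {m : ℕ} {x : E} (hf : ∀ t : ℝ, f (t • x) = t ^ m * f x)
    (hx : DifferentiableAt ℝ f x) : fderiv ℝ f x x = m * f x := by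
  have hchain : HasDerivAt (fun t : ℝ => f (t • x)) (fderiv ℝ f x x) 1 := by
    rw [← one_smul ℝ x] at hx
    have := hx.hasFDerivAt.comp_hasDerivAt (1 : ℝ) ((hasDerivAt_id 1).smul_const x)
    rw [one_smul] at this
    exact this
  have hscaled : HasDerivAt (fun t : ℝ => t ^ m * f x) (m * f x) 1 := by
    simpa using (hasDerivAt_pow m (1 : ℝ)).mul_const (f x)
  simp_rw [hf] at hchain
  exact hchain.unique hscaled

section NormZpow

variable {F : Type*} [NormedAddCommGroup F] [InnerProductSpace ℝ F] {x : F}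

theorem hasFDerivAt_norm_zpow (hx : x ≠ 0) (s : ℤ) :
    HasFDerivAt (fun y : F => ‖y‖ ^ s) ((s * ‖x‖ ^ (s - 2)) • innerSL ℝ x) x := by
  have hx' : ‖x‖ ≠ 0 := norm_ne_zero_iff.2 hx
  have hnorm : HasFDerivAt (‖·‖) (‖x‖⁻¹ • innerSL ℝ x) x := by
    have := (hasStrictFDerivAt_norm_sq x).hasFDerivAt.sqrt (by positivity)
    simp only [Real.sqrt_sq (norm_nonneg _)] at this
    refine this.congr_fderiv ?_
    ext v
    simp only [one_div, mul_inv_rev, smul_apply, coe_innerSL_apply, nsmul_eq_mul, Nat.cast_ofNat,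
      smul_eq_mul]
    field_simp
  refine ((hasDerivAt_zpow s ‖x‖ (Or.inl hx')).comp_hasFDerivAt x hnorm).congr_fderiv ?_
  ext v
  simp only [zpow_sub₀ hx', zpow_ofNat, pow_one, smul_apply, coe_innerSL_apply, smul_eq_mul]
  field_simp

theorem differentiableAt_norm_zpow (hx : x ≠ 0) (s : ℤ) :
    DifferentiableAt ℝ (fun y : F => ‖y‖ ^ s) x :=
  (hasFDerivAt_norm_zpow hx s).differentiableAt

theorem eventually_differentiableAt_norm_zpow (hx : x ≠ 0) (s : ℤ) :
    ∀ᶠ y in 𝓝 x, DifferentiableAt ℝ (fun y : F => ‖y‖ ^ s) y := by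
  filter_upwards [isOpen_ne.mem_nhds hx] with y hy
  exact differentiableAt_norm_zpow hy s

end NormZpow

theorem HasFDerivAt.pd_eq {f : E3 → ℝ} {f' : E3 →L[ℝ] ℝ} {x : E3} (h : HasFDerivAt f f' x)
    (i : Fin 3) : pd i f x = f' (EuclideanSpace.single i 1) := by
  rw [pd, h.fderiv]

theorem Filter.EventuallyEq.pd_eq {f g : E3 → ℝ} {x : E3} (h : f =ᶠ[𝓝 x] g) (i : Fin 3) :
    pd i f x = pd i g x := by
  rw [pd, pd, h.fderiv_eq]

section PointwiseRules

variable {f g : E3 → ℝ} {x : E3}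

theorem pd_add (i : Fin 3) (hf : DifferentiableAt ℝ f x) (hg : DifferentiableAt ℝ g x) :
    pd i (fun y => f y + g y) x = pd i f x + pd i g x := by
  simp only [pd, fderiv_fun_add hf hg, add_apply]

theorem pd_mul (i : Fin 3) (hf : DifferentiableAt ℝ f x) (hg : DifferentiableAt ℝ g x) :
    pd i (fun y => f y * g y) x = pd i f x * g x + f x * pd i g x := by
  simp only [pd, fderiv_fun_mul hf hg, add_apply, smul_apply, smul_eq_mul]
  ring

theorem pd_const_mul (i : Fin 3) (a : ℝ) (hf : DifferentiableAt ℝ f x) :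
    pd i (fun y => a * f y) x = a * pd i f x := by
  simp only [pd, fderiv_const_mul hf, smul_apply, smul_eq_mul]

theorem pd_coord (i j : Fin 3) (x : E3) :
    pd i (fun y : E3 => y j) x = if i = j then 1 else 0 := by
  rw [show (fun y : E3 => y j) = EuclideanSpace.proj j from rfl,
    (EuclideanSpace.proj j : E3 →L[ℝ] ℝ).hasFDerivAt.pd_eq]
  simp only [PiLp.proj_apply, PiLp.single_apply, eq_comm]

theorem sum_coord_mul_pd (f : E3 → ℝ) (x : E3) :
    ∑ i, x i * pd i f x = fderiv ℝ f x x := by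
  rw [← congrArg (fderiv ℝ f x) ((EuclideanSpace.basisFun (Fin 3) ℝ).sum_repr x)]
  simp [pd]

end PointwiseRules

theorem ContDiff.differentiableAt_pd {f : E3 → ℝ} (hf : ContDiff ℝ 2 f) (i : Fin 3) (x : E3) :
    DifferentiableAt ℝ (pd i f) x :=
  ((hf.fderiv_right (m := 1) le_rfl).clm_apply contDiff_const).differentiable one_ne_zero x

theorem lap_mul {f g : E3 → ℝ} {x : E3}
    (hf : ∀ᶠ y in 𝓝 x, DifferentiableAt ℝ f y) (hf' : ∀ i, DifferentiableAt ℝ (pd i f) x)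
    (hg : ∀ᶠ y in 𝓝 x, DifferentiableAt ℝ g y) (hg' : ∀ i, DifferentiableAt ℝ (pd i g) x) :
    lap (fun y => f y * g y) x = lap f x * g x + 2 * ∑ i, pd i f x * pd i g x + f x * lap g x := by
  have hpd (i : Fin 3) : pd i (fun y => f y * g y) =ᶠ[𝓝 x]
      fun y => pd i f y * g y + f y * pd i g y := by
    filter_upwards [hf, hg] with y hfy hgy
    exact pd_mul i hfy hgy
  have hfx := hf.self_of_nhds
  have hgx := hg.self_of_nhds
  have hpd2 (i : Fin 3) : pd i (pd i fun y => f y * g y) x =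
      pd i (pd i f) x * g x + 2 * (pd i f x * pd i g x) + f x * pd i (pd i g) x := by
    rw [(hpd i).pd_eq,
      pd_add (f := fun y => pd i f y * g y) (g := fun y => f y * pd i g y) i
        ((hf' i).mul hgx) (hfx.mul (hg' i)),
      pd_mul i (hf' i) hgx, pd_mul i hfx (hg' i)]
    ring
  simp only [lap, hpd2, Finset.sum_add_distrib, Finset.sum_mul, Finset.mul_sum]

section PdNormZpow

variable {x : E3}

theorem pd_norm_zpow (hx : x ≠ 0) (s : ℤ) (i : Fin 3) :
    pd i (fun y : E3 => ‖y‖ ^ s) x = s * ‖x‖ ^ (s - 2) * x i := by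
  rw [(hasFDerivAt_norm_zpow hx s).pd_eq]
  simp [EuclideanSpace.inner_single_right, mul_assoc]

theorem pd_norm_zpow_eventuallyEq (hx : x ≠ 0) (s : ℤ) (i : Fin 3) :
    pd i (fun y : E3 => ‖y‖ ^ s) =ᶠ[𝓝 x] fun y => s * ‖y‖ ^ (s - 2) * y i := by
  filter_upwards [isOpen_ne.mem_nhds hx] with y hy
  exact pd_norm_zpow hy s i

theorem differentiableAt_pd_norm_zpow (hx : x ≠ 0) (s : ℤ) (i : Fin 3) :
    DifferentiableAt ℝ (pd i fun y : E3 => ‖y‖ ^ s) x := by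
  refine DifferentiableAt.congr_of_eventuallyEq ?_ (pd_norm_zpow_eventuallyEq hx s i)
  exact ((differentiableAt_norm_zpow hx _).const_mul _).mul
    (EuclideanSpace.proj i : E3 →L[ℝ] ℝ).differentiableAt

theorem lap_norm_zpow (hx : x ≠ 0) (s : ℤ) :
    lap (fun y : E3 => ‖y‖ ^ s) x = s * (s + 1) * ‖x‖ ^ (s - 2) := by
  have hx' : ‖x‖ ≠ 0 := norm_ne_zero_iff.2 hx
  have hpd2 (i : Fin 3) : pd i (pd i fun y : E3 => ‖y‖ ^ s) x =
      s * ((s - 2) * ‖x‖ ^ (s - 4) * x i ^ 2 + ‖x‖ ^ (s - 2)) := by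
    rw [(pd_norm_zpow_eventuallyEq hx s i).pd_eq,
      pd_mul (f := fun y => s * ‖y‖ ^ (s - 2)) (g := fun y : E3 => y i) i
        ((differentiableAt_norm_zpow hx _).const_mul _)
        (EuclideanSpace.proj i : E3 →L[ℝ] ℝ).differentiableAt,
      pd_const_mul i _ (differentiableAt_norm_zpow hx _), pd_norm_zpow hx, pd_coord,
      if_pos rfl, show s - 2 - 2 = s - 4 by ring]
    push_cast
    ring
  have hsum : ∑ i, x i ^ 2 = ‖x‖ ^ 2 := (EuclideanSpace.real_norm_sq_eq x).symm
  have hpow : ‖x‖ ^ (s - 4) * ‖x‖ ^ 2 = ‖x‖ ^ (s - 2) := by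
    rw [← zpow_natCast, ← zpow_add₀ hx']
    congr 1
    ring
  simp only [lap, hpd2, ← Finset.mul_sum, Finset.sum_add_distrib, hsum, Finset.sum_const,
    Finset.card_univ, Fintype.card_fin, nsmul_eq_mul]
  linear_combination (s : ℝ) * (s - 2) * hpow

end PdNormZpow

theorem IsHomogPoly.contDiff {m : ℕ} {p : E3 → ℝ} (hp : IsHomogPoly m p) {n : WithTop ℕ∞} :
    ContDiff ℝ n p := by
  obtain ⟨P, -, hpP⟩ := hp
  have hpoly :
      AnalyticOnNhd ℝ (fun x : E3 => eval (fun i => EuclideanSpace.proj i x) P) Set.univ :=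
    AnalyticOnNhd.eval_continuousLinearMap' _ P
  exact funext hpP ▸ hpoly.contDiff

theorem IsHomogPoly.map_smul {m : ℕ} {p : E3 → ℝ} (hp : IsHomogPoly m p) (t : ℝ) (x : E3) :
    p (t • x) = t ^ m * p x := by
  obtain ⟨P, hP, hpP⟩ := hp
  rw [hpP, hpP, ← hP.eval_smul]
  rfl

/-- for a homogeneous polynomial `p` of degree `m` and `s : ℤ`,
`Δ(‖x‖^s p) = ‖x‖^(s-2) (s(s+1+2m) p + ‖x‖² Δp)` away from the origin. -/
theorem stmt_0 (m : ℕ) (s : ℤ) (p : E3 → ℝ) (hp : IsHomogPoly m p)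
    (x : E3) (hx : x ≠ 0) :
    lap (fun y => ‖y‖ ^ s * p y) x =
      ‖x‖ ^ (s - 2) *
        ((s : ℝ) * ((s : ℝ) + 1 + 2 * (m : ℝ)) * p x + ‖x‖ ^ 2 * lap p x) := by
  have hp2 : ContDiff ℝ 2 p := hp.contDiff
  have hradial : ∑ i, pd i (fun y : E3 => ‖y‖ ^ s) x * pd i p x =
      s * ‖x‖ ^ (s - 2) * (m * p x) := by
    simp_rw [pd_norm_zpow hx, mul_assoc, ← Finset.mul_sum, sum_coord_mul_pd,
      fderiv_apply_self_of_map_smul_eq_pow_mul (hp.map_smul · x) (hp2.differentiable two_ne_zero x)]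
  have hpow : ‖x‖ ^ s = ‖x‖ ^ (s - 2) * ‖x‖ ^ 2 := by
    rw [← zpow_natCast, ← zpow_add₀ (norm_ne_zero_iff.2 hx)]
    norm_num
  rw [lap_mul (eventually_differentiableAt_norm_zpow hx s) (differentiableAt_pd_norm_zpow hx s)
    (Eventually.of_forall (hp2.differentiable two_ne_zero)) (hp2.differentiableAt_pd · x),
    lap_norm_zpow hx, hradial, hpow]
  ring
end
end

section
/- Let B_a be the open ball of radius a > 0 centered at the origin in ℝ³, 0 < α < 1, m ∈ ℕ, f ∈ C^{m,α}(B_a), and set f_R = f − T_m(f). Let s be an integer with s ≤ 1 and m + s − 1 ≥ 1. Then for every 0 < ε < a, the function defined on B_ε by x ↦ ‖x‖^{s−2} f_R(x) for x ≠ 0 and by 0 at the origin belongs to C^{m+s−2,α}(B_ε). -/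
noncomputable section

/-- The partial derivative `∂^β` associated with a multi-index `β`. -/
def pdM (β : Fin 3 → ℕ) (f : E3 → ℝ) : E3 → ℝ :=
  (List.ofFn (fun i : Fin 3 => (pd i)^[β i])).foldr (· ∘ ·) id f

/-- The finset of multi-indices `β` with `|β| ≤ m`. -/
def multiIdx (m : ℕ) : Finset (Fin 3 → ℕ) :=
  (Fintype.piFinset fun _ : Fin 3 => Finset.range (m + 1)).filter fun β => ∑ i, β i ≤ m

/-- The Taylor polynomial of order `m` of `f` at the origin. -/
def taylorPoly (m : ℕ) (f : E3 → ℝ) : E3 → ℝ :=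
  fun x => ∑ β ∈ multiIdx m,
    (∏ i, (Nat.factorial (β i) : ℝ))⁻¹ * pdM β f 0 * ∏ i, x i ^ β i

/-- `f ∈ C^{m,α}(s)`: `f` is `m` times continuously differentiable on `s` and all its
partial derivatives of order `m` are `α`-Hölder continuous on `s`. -/
def HolderOn (m : ℕ) (α : ℝ) (s : Set E3) (f : E3 → ℝ) : Prop :=
  ContDiffOn ℝ (m : ℕ∞) f s ∧
    ∀ β : Fin 3 → ℕ, (∑ i, β i) = m →
      ∃ C : ℝ, ∀ x ∈ s, ∀ y ∈ s, |pdM β f x - pdM β f y| ≤ C * ‖x - y‖ ^ α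

/-- `f ∈ E^{m,α}(B_a)`: `f = f₁ + r f₂` on `B_a` with `f₁, f₂ ∈ C^{m,α}(B_a)`. -/
def Em (m : ℕ) (α : ℝ) (a : ℝ) (f : E3 → ℝ) : Prop :=
  ∃ f₁ f₂ : E3 → ℝ, HolderOn m α (Metric.ball 0 a) f₁ ∧ HolderOn m α (Metric.ball 0 a) f₂ ∧
    ∀ x ∈ Metric.ball (0 : E3) a, f x = f₁ x + ‖x‖ * f₂ x

/-- `f ∈ E^∞(B_a)`: `f = f₁ + r f₂` on `B_a` with `f₁, f₂ ∈ C^∞(B_a)`. -/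
def Einf (a : ℝ) (f : E3 → ℝ) : Prop :=
  ∃ f₁ f₂ : E3 → ℝ, ContDiffOn ℝ (⊤ : ℕ∞) f₁ (Metric.ball 0 a) ∧ ContDiffOn ℝ (⊤ : ℕ∞) f₂ (Metric.ball 0 a) ∧
    ∀ x ∈ Metric.ball (0 : E3) a, f x = f₁ x + ‖x‖ * f₂ x

set_option synthInstance.maxHeartbeats 1000000
set_option maxHeartbeats 1000000

namespace S7
open Metric Set

def pdList (L : List (Fin 3)) (f : E3 → ℝ) : E3 → ℝ := L.foldr pd f

@[simp] lemma pdList_nil (f : E3 → ℝ) : pdList [] f = f := rfl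
@[simp] lemma pdList_cons (i : Fin 3) (L : List (Fin 3)) (f : E3 → ℝ) :
    pdList (i :: L) f = pd i (pdList L f) := rfl

lemma pdList_append (L₁ L₂ : List (Fin 3)) (f : E3 → ℝ) :
    pdList (L₁ ++ L₂) f = pdList L₁ (pdList L₂ f) := by
  induction L₁ with
  | nil => simp
  | cons i t ih => simp [ih]

lemma pdList_replicate (n : ℕ) (i : Fin 3) (f : E3 → ℝ) :
    pdList (List.replicate n i) f = (pd i)^[n] f := by
  induction n with
  | zero => simp
  | succ n ih => rw [List.replicate_succ, pdList_cons, ih, Function.iterate_succ_apply']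

/-- canonical list of a multi-index -/
def canon (β : Fin 3 → ℕ) : List (Fin 3) :=
  List.replicate (β 0) 0 ++ (List.replicate (β 1) 1 ++ List.replicate (β 2) 2)

@[simp] lemma canon_length (β : Fin 3 → ℕ) : (canon β).length = ∑ i, β i := by
  simp [canon, Fin.sum_univ_three]; omega

lemma pdM_eq_pdList (β : Fin 3 → ℕ) (f : E3 → ℝ) : pdM β f = pdList (canon β) f := by
  have : pdM β f = (pd 0)^[β 0] ((pd 1)^[β 1] ((pd 2)^[β 2] f)) := by
    simp [pdM, List.ofFn_succ]
  rw [this, canon, pdList_append, pdList_append, pdList_replicate, pdList_replicate,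
    pdList_replicate]

lemma canon_zero : canon 0 = [] := by simp [canon]

lemma vec_decomp (y : E3) : y = ∑ i, y i • EuclideanSpace.single i 1 := by
  ext j
  rw [Fin.sum_univ_three]
  simp [PiLp.add_apply, PiLp.smul_apply, EuclideanSpace.single_apply]
  fin_cases j <;> simp

lemma abs_coord_le_norm (x : E3) (j : Fin 3) : |x j| ≤ ‖x‖ := by
  have h := EuclideanSpace.norm_eq x
  have h2 : |x j| = Real.sqrt (|x j| ^ 2) := by rw [Real.sqrt_sq_eq_abs, abs_abs]
  rw [h2, h]
  exact Real.sqrt_le_sqrt <|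
    Finset.single_le_sum (f := fun i => |x i| ^ 2) (fun i _ => by positivity) (Finset.mem_univ j)

lemma norm_proj_le_one (j : Fin 3) : ‖(EuclideanSpace.proj j : E3 →L[ℝ] ℝ)‖ ≤ 1 := by
  apply ContinuousLinearMap.opNorm_le_bound _ zero_le_one
  intro x; rw [one_mul]
  simpa using abs_coord_le_norm x j

lemma clm_expand (ℓ : E3 →L[ℝ] ℝ) :
    ℓ = ∑ j, ℓ (EuclideanSpace.single j 1) • (EuclideanSpace.proj j : E3 →L[ℝ] ℝ) := by
  refine ContinuousLinearMap.ext fun y => ?_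
  conv_lhs => rw [vec_decomp y]
  rw [map_sum]
  simp [ContinuousLinearMap.sum_apply, mul_comm]

lemma clm_norm_le (c : Fin 3 → ℝ) :
    ‖∑ j, c j • (EuclideanSpace.proj j : E3 →L[ℝ] ℝ)‖ ≤ ∑ j, |c j| := by
  refine (norm_sum_le _ _).trans (Finset.sum_le_sum fun j _ => ?_)
  refine (norm_smul_le (c j) ((EuclideanSpace.proj j : E3 →L[ℝ] ℝ))).trans ?_
  calc ‖c j‖ * ‖(EuclideanSpace.proj j : E3 →L[ℝ] ℝ)‖ ≤ ‖c j‖ * 1 :=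
        mul_le_mul_of_nonneg_left (norm_proj_le_one j) (norm_nonneg _)
    _ = |c j| := by rw [mul_one, Real.norm_eq_abs]

lemma pd_congr {U : Set E3} (hU : IsOpen U) {f₁ f₂ : E3 → ℝ} (h : ∀ y ∈ U, f₁ y = f₂ y)
    {x : E3} (hx : x ∈ U) (i : Fin 3) : pd i f₁ x = pd i f₂ x := by
  unfold pd
  rw [Filter.EventuallyEq.fderiv_eq (Filter.eventually_of_mem (hU.mem_nhds hx) h)]

lemma pdList_congr {U : Set E3} (hU : IsOpen U) {f₁ f₂ : E3 → ℝ} (h : ∀ y ∈ U, f₁ y = f₂ y)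
    (L : List (Fin 3)) : ∀ x ∈ U, pdList L f₁ x = pdList L f₂ x := by
  induction L with
  | nil => simpa using h
  | cons i t ih => exact fun x hx => pd_congr hU ih hx i

lemma pd_eq_comp (i : Fin 3) (f : E3 → ℝ) :
    pd i f = (ContinuousLinearMap.apply ℝ ℝ (EuclideanSpace.single i 1)) ∘ (fderiv ℝ f) := rfl

lemma contDiffOn_pd {U : Set E3} (hU : IsOpen U) {f : E3 → ℝ} {n : ℕ}
    (hf : ContDiffOn ℝ ((n + 1 : ℕ) : ℕ∞) f U) (i : Fin 3) :
    ContDiffOn ℝ (n : ℕ∞) (pd i f) U := by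
  have h1 : ContDiffOn ℝ (n : ℕ∞) (fderiv ℝ f) U := by
    apply hf.fderiv_of_isOpen hU
    exact_mod_cast le_refl _
  rw [pd_eq_comp]
  exact (ContinuousLinearMap.apply ℝ ℝ (EuclideanSpace.single i 1)).contDiff.comp_contDiffOn h1

lemma contDiffOn_pdList {U : Set E3} (hU : IsOpen U) {f : E3 → ℝ} {n : ℕ}
    (hf : ContDiffOn ℝ (n : ℕ∞) f U) :
    ∀ (L : List (Fin 3)) (r : ℕ), L.length + r ≤ n → ContDiffOn ℝ (r : ℕ∞) (pdList L f) U := by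
  intro L
  induction L with
  | nil => exact fun r hr => hf.of_le (by exact_mod_cast hr.trans_eq' (by simp))
  | cons i t ih =>
      intro r hr
      rw [pdList_cons]
      exact contDiffOn_pd hU (ih (r + 1) (by simpa [Nat.add_comm, Nat.add_assoc,
        Nat.add_left_comm] using hr)) i

lemma diffAt_of_contDiffOn {U : Set E3} (hU : IsOpen U) {f : E3 → ℝ} {n : ℕ}
    (hf : ContDiffOn ℝ ((n + 1 : ℕ) : ℕ∞) f U) {x : E3} (hx : x ∈ U) :
    DifferentiableAt ℝ f x := by
  have := (hf.differentiableOn (by simp)) x hx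
  exact this.differentiableAt (hU.mem_nhds hx)

lemma hasFDerivAt_expand {h : E3 → ℝ} {x : E3} (hd : DifferentiableAt ℝ h x) :
    HasFDerivAt h (∑ j, pd j h x • (EuclideanSpace.proj j : E3 →L[ℝ] ℝ)) x := by
  have := hd.hasFDerivAt
  convert this using 1
  exact (clm_expand (fderiv ℝ h x)).symm


lemma pd_pd_eq_second {U : Set E3} (hU : IsOpen U) {h : E3 → ℝ}
    (hh : ContDiffOn ℝ ((2 : ℕ) : ℕ∞) h U) {x : E3} (hx : x ∈ U) (i j : Fin 3) :
    pd i (pd j h) x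
      = fderiv ℝ (fderiv ℝ h) x (EuclideanSpace.single i 1) (EuclideanSpace.single j 1) := by
  have hf'C : ContDiffOn ℝ ((1 : ℕ) : ℕ∞) (fderiv ℝ h) U := by
    apply hh.fderiv_of_isOpen hU
    exact_mod_cast le_refl _
  have hf'd : DifferentiableAt ℝ (fderiv ℝ h) x := by
    have := (hf'C.differentiableOn (by simp)) x hx
    exact this.differentiableAt (hU.mem_nhds hx)
  have hcomp : HasFDerivAt
      ((ContinuousLinearMap.apply ℝ ℝ (EuclideanSpace.single j 1)) ∘ (fderiv ℝ h))
      ((ContinuousLinearMap.apply ℝ ℝ (EuclideanSpace.single j 1)).comp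
        (fderiv ℝ (fderiv ℝ h) x)) x :=
    HasFDerivAt.comp (f := fderiv ℝ h) x
      ((ContinuousLinearMap.apply ℝ ℝ (EuclideanSpace.single j (1:ℝ) : E3)).hasFDerivAt)
      hf'd.hasFDerivAt
  show fderiv ℝ (pd j h) x (EuclideanSpace.single i 1) = _
  rw [pd_eq_comp, hcomp.fderiv]
  rfl

lemma pd_pd_comm {U : Set E3} (hU : IsOpen U) {h : E3 → ℝ}
    (hh : ContDiffOn ℝ ((2 : ℕ) : ℕ∞) h U) {x : E3} (hx : x ∈ U) (i j : Fin 3) :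
    pd i (pd j h) x = pd j (pd i h) x := by
  have hdiff : ∀ᶠ y in nhds x, HasFDerivAt h (fderiv ℝ h y) y := by
    filter_upwards [hU.mem_nhds hx] with y hy
    exact (diffAt_of_contDiffOn (n := 1) hU hh hy).hasFDerivAt
  have hf'd : DifferentiableAt ℝ (fderiv ℝ h) x := by
    have hf'C : ContDiffOn ℝ ((1 : ℕ) : ℕ∞) (fderiv ℝ h) U := by
      apply hh.fderiv_of_isOpen hU
      exact_mod_cast le_refl _
    exact ((hf'C.differentiableOn (by simp)) x hx).differentiableAt
      (hU.mem_nhds hx)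
  rw [pd_pd_eq_second hU hh hx i j, pd_pd_eq_second hU hh hx j i]
  exact second_derivative_symmetric_of_eventually hdiff hf'd.hasFDerivAt _ _

lemma pdList_perm {U : Set E3} (hU : IsOpen U) {f : E3 → ℝ} {n : ℕ}
    (hf : ContDiffOn ℝ (n : ℕ∞) f U) :
    ∀ {L L' : List (Fin 3)}, L.Perm L' → L.length ≤ n →
      ∀ x ∈ U, pdList L f x = pdList L' f x := by
  intro L L' hperm
  induction hperm with
  | nil => intro _ x _; rfl
  | cons i t ih =>
      intro hlen x hx
      exact pd_congr hU (fun y hy => ih (by simpa using Nat.le_of_succ_le hlen) y hy) hx i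
  | swap i j t =>
      intro hlen x hx
      have hsm : ContDiffOn ℝ ((2 : ℕ) : ℕ∞) (pdList t f) U := by
        apply contDiffOn_pdList hU hf t 2
        simp only [List.length_cons] at hlen; omega
      exact pd_pd_comm hU hsm hx j i
  | trans h₁ h₂ ih₁ ih₂ =>
      intro hlen x hx
      rw [ih₁ hlen x hx, ih₂ (h₁.length_eq ▸ hlen) x hx]


def mono (δ : Fin 3 → ℕ) : E3 → ℝ := fun x => ∏ i, x i ^ δ i

lemma mono_eq3 (δ : Fin 3 → ℕ) :
    mono δ = fun y : E3 => y 0 ^ δ 0 * (y 1 ^ δ 1 * y 2 ^ δ 2) := by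
  funext y
  simp [mono, Fin.prod_univ_three, mul_assoc]

lemma hasFDerivAt_pow_coord (i : Fin 3) (n : ℕ) (x : E3) :
    HasFDerivAt (fun y : E3 => y i ^ n)
      (((n : ℝ) * x i ^ (n - 1)) • (EuclideanSpace.proj i : E3 →L[ℝ] ℝ)) x :=
 by
  have h1 : HasFDerivAt (fun y : E3 => (EuclideanSpace.proj i : E3 →L[ℝ] ℝ) y)
      (EuclideanSpace.proj i : E3 →L[ℝ] ℝ) x := (EuclideanSpace.proj i : E3 →L[ℝ] ℝ).hasFDerivAt
  exact (hasDerivAt_pow n (x i)).comp_hasFDerivAt x h1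

lemma pd_of_hasFDerivAt {h : E3 → ℝ} {D : E3 →L[ℝ] ℝ} {x : E3} (hD : HasFDerivAt h D x)
    (j : Fin 3) : pd j h x = D (EuclideanSpace.single j 1) := by
  rw [pd, hD.fderiv]

lemma mono_hasFDerivAt' (δ : Fin 3 → ℕ) (x : E3) :
    HasFDerivAt (mono δ)
      (x 0 ^ δ 0 • (x 1 ^ δ 1 • (((δ 2 : ℝ) * x 2 ^ (δ 2 - 1)) • (EuclideanSpace.proj 2 : E3 →L[ℝ] ℝ))
          + x 2 ^ δ 2 • (((δ 1 : ℝ) * x 1 ^ (δ 1 - 1)) • (EuclideanSpace.proj 1 : E3 →L[ℝ] ℝ)))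
        + (x 1 ^ δ 1 * x 2 ^ δ 2) •
            (((δ 0 : ℝ) * x 0 ^ (δ 0 - 1)) • (EuclideanSpace.proj 0 : E3 →L[ℝ] ℝ))) x := by
  rw [mono_eq3]
  exact (hasFDerivAt_pow_coord 0 (δ 0) x).mul
    ((hasFDerivAt_pow_coord 1 (δ 1) x).mul (hasFDerivAt_pow_coord 2 (δ 2) x))

lemma mono_diff (δ : Fin 3 → ℕ) (x : E3) : DifferentiableAt ℝ (mono δ) x :=
  (mono_hasFDerivAt' δ x).differentiableAt

lemma pd_mono (δ : Fin 3 → ℕ) (j : Fin 3) (x : E3) :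
    pd j (mono δ) x = (δ j : ℝ) * mono (Function.update δ j (δ j - 1)) x := by
  rw [pd_of_hasFDerivAt (mono_hasFDerivAt' δ x) j]
  have hproj : ∀ i k : Fin 3, (EuclideanSpace.proj i : E3 →L[ℝ] ℝ)
      (EuclideanSpace.single k 1) = if k = i then 1 else 0 := by
    intro i k
    rw [show (EuclideanSpace.proj i : E3 →L[ℝ] ℝ) (EuclideanSpace.single k 1)
      = (EuclideanSpace.single k (1:ℝ) : E3) i from rfl, EuclideanSpace.single_apply]
    by_cases h : i = k <;> simp [h, eq_comm]
  fin_cases j <;>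
    simp [hproj, mono_eq3, Function.update_apply] <;> ring

lemma mono_zero_val (δ : Fin 3 → ℕ) (h : δ ≠ 0) : mono δ (0 : E3) = 0 := by
  obtain ⟨i, hi⟩ : ∃ i, δ i ≠ 0 := by
    by_contra hc
    push_neg at hc
    exact h (funext fun i => hc i)
  apply Finset.prod_eq_zero (Finset.mem_univ i)
  have : (0 : E3) i = 0 := rfl
  rw [this, zero_pow hi]

lemma mono_zero_idx (x : E3) : mono 0 x = 1 := by simp [mono]

lemma abs_mono_le (δ : Fin 3 → ℕ) (x : E3) :
    |mono δ x| ≤ ‖x‖ ^ ((∑ i, δ i : ℕ) : ℝ) := by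
  rw [Real.rpow_natCast, mono, Finset.abs_prod]
  rw [← Finset.prod_pow_eq_pow_sum]
  apply Finset.prod_le_prod (fun i _ => abs_nonneg _)
  intro i _
  rw [abs_pow]
  exact pow_le_pow_left₀ (abs_nonneg _) (abs_coord_le_norm x i) _

lemma mem_multiIdx {r : ℕ} {β : Fin 3 → ℕ} : β ∈ multiIdx r ↔ ∑ i, β i ≤ r := by
  constructor
  · intro h
    exact (Finset.mem_filter.mp h).2
  · intro h
    refine Finset.mem_filter.mpr ⟨?_, h⟩
    refine Fintype.mem_piFinset.mpr fun i => Finset.mem_range.mpr ?_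
    have : β i ≤ ∑ k, β k := Finset.single_le_sum (fun k _ => Nat.zero_le _) (Finset.mem_univ i)
    omega


lemma pd_sum {I : Type*} {S : Finset I} {F : I → E3 → ℝ} {x : E3}
    (hd : ∀ b ∈ S, DifferentiableAt ℝ (F b) x) (j : Fin 3) :
    pd j (fun y => ∑ b ∈ S, F b y) x = ∑ b ∈ S, pd j (F b) x := by
  unfold pd
  rw [fderiv_fun_sum hd]
  simp [ContinuousLinearMap.sum_apply]

lemma pd_const_mul {u : E3 → ℝ} {x : E3} (hd : DifferentiableAt ℝ u x) (c : ℝ) (j : Fin 3) :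
    pd j (fun y => c * u y) x = c * pd j u x := by
  unfold pd
  rw [fderiv_const_mul hd c]
  simp

def PL (m : ℕ) (f : E3 → ℝ) (L : List (Fin 3)) : E3 → ℝ :=
  fun x => ∑ β ∈ multiIdx (m - L.length),
    ((∏ i, ((β i).factorial : ℝ))⁻¹ * pdList (canon β ++ L) f 0) * mono β x

lemma count_canon (β : Fin 3 → ℕ) (i : Fin 3) : (canon β).count i = β i := by
  fin_cases i <;>
    simp [canon, List.count_append, List.count_replicate] <;> decide

lemma canon_perm_cons (β : Fin 3 → ℕ) (j : Fin 3) (hj : β j ≠ 0) :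
    (canon β).Perm (j :: canon (Function.update β j (β j - 1))) := by
  rw [List.perm_iff_count]
  intro i
  rw [count_canon, List.count_cons, count_canon, Function.update_apply]
  by_cases h : i = j <;> simp [h] <;> omega

lemma PL_diff (m : ℕ) (f : E3 → ℝ) (L : List (Fin 3)) (x : E3) :
    DifferentiableAt ℝ (PL m f L) x := by
  unfold PL
  apply DifferentiableAt.fun_sum
  intro β _
  exact (mono_diff β x).const_mul _

lemma PL_zero (m : ℕ) (f : E3 → ℝ) (L : List (Fin 3)) : PL m f L 0 = pdList L f 0 := by
  unfold PL
  rw [Finset.sum_eq_single (0 : Fin 3 → ℕ)]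
  · simp [mono_zero_idx, canon_zero]
  · intro β _ hβ
    rw [mono_zero_val β hβ, mul_zero]
  · intro h
    exact absurd (mem_multiIdx.mpr (by simp)) h

lemma taylorPoly_eq_PL (m : ℕ) (f : E3 → ℝ) : taylorPoly m f = PL m f [] := by
  funext x
  unfold taylorPoly PL
  simp only [List.length_nil, Nat.sub_zero, List.append_nil]
  refine Finset.sum_congr rfl fun β _ => ?_
  rw [pdM_eq_pdList]
  simp [mono]

lemma sum_update_sub (β : Fin 3 → ℕ) (j : Fin 3) (hj : β j ≠ 0) :
    ∑ i, (Function.update β j (β j - 1)) i = (∑ i, β i) - 1 := by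
  rw [Finset.sum_update_of_mem (Finset.mem_univ j),
    Finset.sum_eq_sum_sdiff_singleton_add (Finset.mem_univ j) β]
  omega

lemma sum_update_add (β : Fin 3 → ℕ) (j : Fin 3) :
    ∑ i, (Function.update β j (β j + 1)) i = (∑ i, β i) + 1 := by
  rw [Finset.sum_update_of_mem (Finset.mem_univ j),
    Finset.sum_eq_sum_sdiff_singleton_add (Finset.mem_univ j) β]
  omega

lemma prod_factorial_update (β : Fin 3 → ℕ) (j : Fin 3) (hj : β j ≠ 0) :
    (∏ i, ((β i).factorial : ℝ)) = (β j : ℝ) * ∏ i, (((Function.update β j (β j - 1)) i).factorial : ℝ) := by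
  have hupd : (fun i => ((Function.update β j (β j - 1)) i).factorial)
      = Function.update (fun i => (β i).factorial) j ((β j - 1).factorial) := by
    funext i
    rw [Function.update_apply, Function.update_apply]
    split <;> simp [*]
  have hN : (∏ i, (β i).factorial) = β j * ∏ i, ((Function.update β j (β j - 1)) i).factorial := by
    rw [hupd, Finset.prod_update_of_mem (Finset.mem_univ j),
      Finset.prod_eq_prod_diff_singleton_mul (Finset.mem_univ j) (fun i => (β i).factorial),
      ← Nat.mul_factorial_pred hj]
    ring
  exact_mod_cast congrArg (Nat.cast : ℕ → ℝ) hN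

lemma pd_PL {a : ℝ} {m : ℕ} {f : E3 → ℝ} (ha : 0 < a)
    (hf : ContDiffOn ℝ (m : ℕ∞) f (Metric.ball 0 a)) {L : List (Fin 3)}
    (hL : L.length < m) (j : Fin 3) (x : E3) :
    pd j (PL m f L) x = PL m f (j :: L) x := by
  have h0mem : (0 : E3) ∈ Metric.ball (0 : E3) a := by simp [ha]
  unfold PL
  rw [pd_sum (fun β _ => (mono_diff β x).const_mul _) j]
  have hterm : ∀ β ∈ multiIdx (m - L.length),
      pd j (fun y => ((∏ i, ((β i).factorial : ℝ))⁻¹ * pdList (canon β ++ L) f 0) * mono β y) x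
      = ((∏ i, ((β i).factorial : ℝ))⁻¹ * pdList (canon β ++ L) f 0) *
          ((β j : ℝ) * mono (Function.update β j (β j - 1)) x) := by
    intro β _
    rw [pd_const_mul (mono_diff β x) _ j, pd_mono]
  rw [Finset.sum_congr rfl hterm]
  rw [← Finset.sum_filter_of_ne (p := fun β => β j ≠ 0)
    (by intro β _ hne; by_contra h; rw [h] at hne; simp at hne)]
  have hlen : (j :: L).length = L.length + 1 := rfl
  rw [hlen]
  refine Finset.sum_nbij' (i := fun β => Function.update β j (β j - 1))
    (j := fun β' => Function.update β' j (β' j + 1)) ?_ ?_ ?_ ?_ ?_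
  · intro β hβ
    obtain ⟨hβm, hβj⟩ := Finset.mem_filter.mp hβ
    rw [mem_multiIdx] at hβm ⊢
    rw [sum_update_sub β j hβj]
    omega
  · intro β' hβ'
    rw [mem_multiIdx] at hβ'
    refine Finset.mem_filter.mpr ⟨mem_multiIdx.mpr ?_, ?_⟩
    · rw [sum_update_add]
      omega
    · simp
  · intro β hβ
    obtain ⟨_, hβj⟩ := Finset.mem_filter.mp hβ
    funext i
    by_cases h : i = j <;> simp [h, Function.update_apply] <;> omega
  · intro β' _
    funext i
    by_cases h : i = j <;> simp [h, Function.update_apply]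
  · intro β hβ
    obtain ⟨hβm, hβj⟩ := Finset.mem_filter.mp hβ
    rw [mem_multiIdx] at hβm
    set β'' := Function.update β j (β j - 1) with hβ''
    have hperm : (canon β ++ L).Perm (canon β'' ++ (j :: L)) := by
      refine ((canon_perm_cons β j hβj).append_right L).trans ?_
      exact ((List.perm_middle).symm)
    have hlen2 : (canon β ++ L).length ≤ m := by
      rw [List.length_append, canon_length]
      omega
    rw [pdList_perm Metric.isOpen_ball hf hperm hlen2 0 h0mem]
    rw [prod_factorial_update β j hβj]
    have hbj : (β j : ℝ) ≠ 0 := Nat.cast_ne_zero.mpr hβj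
    field_simp
    ring


def FR (m : ℕ) (f : E3 → ℝ) (L : List (Fin 3)) : E3 → ℝ :=
  fun x => pdList L f x - PL m f L x

lemma FR_zero (m : ℕ) (f : E3 → ℝ) (L : List (Fin 3)) : FR m f L 0 = 0 := by
  simp [FR, PL_zero]

lemma pdList_diffAt {a : ℝ} {m : ℕ} {f : E3 → ℝ}
    (hf : ContDiffOn ℝ (m : ℕ∞) f (Metric.ball 0 a)) {L : List (Fin 3)}
    (hL : L.length < m) {x : E3} (hx : x ∈ Metric.ball (0 : E3) a) :
    DifferentiableAt ℝ (pdList L f) x := by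
  have h1 : ContDiffOn ℝ ((0 + 1 : ℕ) : ℕ∞) (pdList L f) (Metric.ball 0 a) :=
    contDiffOn_pdList Metric.isOpen_ball hf L 1 (by omega)
  exact diffAt_of_contDiffOn Metric.isOpen_ball h1 hx

lemma FR_diffAt {a : ℝ} {m : ℕ} {f : E3 → ℝ}
    (hf : ContDiffOn ℝ (m : ℕ∞) f (Metric.ball 0 a)) {L : List (Fin 3)}
    (hL : L.length < m) {x : E3} (hx : x ∈ Metric.ball (0 : E3) a) :
    DifferentiableAt ℝ (FR m f L) x :=
  (pdList_diffAt hf hL hx).sub (PL_diff m f L x)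

lemma pd_FR {a : ℝ} {m : ℕ} {f : E3 → ℝ} (ha : 0 < a)
    (hf : ContDiffOn ℝ (m : ℕ∞) f (Metric.ball 0 a)) {L : List (Fin 3)}
    (hL : L.length < m) {x : E3} (hx : x ∈ Metric.ball (0 : E3) a) (j : Fin 3) :
    pd j (FR m f L) x = FR m f (j :: L) x := by
  have h := fderiv_fun_sub (𝕜 := ℝ) (pdList_diffAt hf hL hx) (PL_diff m f L x)
  unfold FR pd
  rw [h, ContinuousLinearMap.sub_apply, ← pd_PL ha hf hL j x]
  rfl

lemma FR_hasFDerivAt {a : ℝ} {m : ℕ} {f : E3 → ℝ} (ha : 0 < a)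
    (hf : ContDiffOn ℝ (m : ℕ∞) f (Metric.ball 0 a)) {L : List (Fin 3)}
    (hL : L.length < m) {x : E3} (hx : x ∈ Metric.ball (0 : E3) a) :
    HasFDerivAt (FR m f L)
      (∑ j, FR m f (j :: L) x • (EuclideanSpace.proj j : E3 →L[ℝ] ℝ)) x := by
  have h := hasFDerivAt_expand (FR_diffAt hf hL hx)
  have heq : ∀ j : Fin 3, pd j (FR m f L) x = FR m f (j :: L) x :=
    fun j => pd_FR ha hf hL hx j
  simpa [heq] using h

lemma sum_count_eq_length (L : List (Fin 3)) : ∑ i, L.count i = L.length := by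
  induction L with
  | nil => simp
  | cons a t ih =>
      simp only [List.count_cons, List.length_cons, Finset.sum_add_distrib, ih, beq_iff_eq]
      congr 1
      simp [Finset.sum_ite_eq]

lemma norm_le_of_mem_segment {x z : E3} (hz : z ∈ segment ℝ 0 x) : ‖z‖ ≤ ‖x‖ := by
  rw [segment_eq_image] at hz
  obtain ⟨t, ht, rfl⟩ := hz
  simp only [smul_zero, sub_zero, zero_add]
  rw [norm_smul]
  simp only [Real.norm_eq_abs]
  calc |t| * ‖x‖ ≤ 1 * ‖x‖ := by
        apply mul_le_mul_of_nonneg_right _ (norm_nonneg x)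
        rw [abs_le]; constructor <;> linarith [ht.1, ht.2]
    _ = ‖x‖ := one_mul _

lemma FR_bound {a α : ℝ} {m : ℕ} {f : E3 → ℝ} (ha : 0 < a) (hα0 : 0 < α)
    (hf : ContDiffOn ℝ (m : ℕ∞) f (Metric.ball 0 a))
    (hH : ∀ β : Fin 3 → ℕ, (∑ i, β i) = m →
      ∃ C : ℝ, ∀ x ∈ Metric.ball (0 : E3) a, ∀ y ∈ Metric.ball (0 : E3) a,
        |pdM β f x - pdM β f y| ≤ C * ‖x - y‖ ^ α) :
    ∀ (n : ℕ) (L : List (Fin 3)), n ≤ m → L.length = m - n →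
      ∃ C : ℝ, 0 ≤ C ∧ ∀ x ∈ Metric.ball (0 : E3) a,
        |FR m f L x| ≤ C * ‖x‖ ^ ((n : ℝ) + α) := by
  have h0mem : (0 : E3) ∈ Metric.ball (0 : E3) a := by simp [ha]
  intro n
  induction n with
  | zero =>
      intro L _ hL
      have hLm : L.length = m := by omega
      set β : Fin 3 → ℕ := fun i => L.count i with hβ
      have hβs : ∑ i, β i = m := by rw [hβ]; rw [sum_count_eq_length]; exact hLm
      obtain ⟨C, hC⟩ := hH β hβs
      refine ⟨max C 0, le_max_right _ _, fun x hx => ?_⟩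
      have hPL : PL m f L x = pdList L f 0 := by
        unfold PL
        have hset : multiIdx (m - L.length) = {0} := by
          ext γ
          rw [mem_multiIdx]
          simp only [Finset.mem_singleton, hLm, Nat.sub_self, Nat.le_zero,
            Finset.sum_eq_zero_iff, Finset.mem_univ]
          constructor
          · intro h; funext i; exact h i trivial
          · intro h i _; rw [h]; rfl
        rw [hset, Finset.sum_singleton, canon_zero, mono_zero_idx]
        simp
      have hperm : L.Perm (canon β) := by
        rw [List.perm_iff_count]
        intro i
        rw [count_canon]
      have hpdL : ∀ y ∈ Metric.ball (0 : E3) a, pdList L f y = pdM β f y := by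
        intro y hy
        rw [pdM_eq_pdList]
        exact pdList_perm Metric.isOpen_ball hf hperm (by omega) y hy
      have : |FR m f L x| = |pdM β f x - pdM β f 0| := by
        unfold FR
        rw [hPL, hpdL x hx, hpdL 0 h0mem]
      rw [this]
      have := hC x hx 0 h0mem
      rw [sub_zero] at this
      calc |pdM β f x - pdM β f 0| ≤ C * ‖x‖ ^ α := this
        _ ≤ max C 0 * ‖x‖ ^ α := by
            exact mul_le_mul_of_nonneg_right (le_max_left _ _)
              (Real.rpow_nonneg (norm_nonneg x) α)
        _ = max C 0 * ‖x‖ ^ ((0 : ℕ) + α : ℝ) := by norm_num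
  | succ n ih =>
      intro L hnm hL
      have hLlt : L.length < m := by omega
      have hcons : ∀ j : Fin 3, (j :: L).length = m - n := by
        intro j; simp [List.length_cons]; omega
      choose Cj hCj0 hCjb using fun j : Fin 3 => ih (j :: L) (by omega) (hcons j)
      refine ⟨∑ j, Cj j, Finset.sum_nonneg fun j _ => hCj0 j, fun x hx => ?_⟩
      by_cases hx0 : x = 0
      · rw [hx0, FR_zero]
        simp only [abs_zero]
        exact mul_nonneg (Finset.sum_nonneg fun j _ => hCj0 j)
          (Real.rpow_nonneg (norm_nonneg _) _)
      have hxpos : 0 < ‖x‖ := norm_pos_iff.mpr hx0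
      have hseg : segment ℝ 0 x ⊆ Metric.ball (0 : E3) a :=
        (convex_ball (0:E3) a).segment_subset h0mem hx
      have hMVT := Convex.norm_image_sub_le_of_norm_hasFDerivWithin_le
        (f := FR m f L)
        (f' := fun z => ∑ j, FR m f (j :: L) z • (EuclideanSpace.proj j : E3 →L[ℝ] ℝ))
        (C := (∑ j, Cj j) * ‖x‖ ^ ((n : ℝ) + α))
        (fun z hz => (FR_hasFDerivAt ha hf hLlt (hseg hz)).hasFDerivWithinAt)
        (fun z hz => by
          refine (clm_norm_le _).trans ?_
          calc ∑ j, |FR m f (j :: L) z| ≤ ∑ j, Cj j * ‖z‖ ^ ((n : ℝ) + α) :=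
                Finset.sum_le_sum fun j _ => hCjb j z (hseg hz)
            _ ≤ ∑ j, Cj j * ‖x‖ ^ ((n : ℝ) + α) := by
                refine Finset.sum_le_sum fun j _ => ?_
                apply mul_le_mul_of_nonneg_left _ (hCj0 j)
                exact Real.rpow_le_rpow (norm_nonneg z) (norm_le_of_mem_segment hz)
                  (by positivity)
            _ = (∑ j, Cj j) * ‖x‖ ^ ((n : ℝ) + α) := by rw [Finset.sum_mul])
        (convex_segment 0 x)
        (left_mem_segment ℝ 0 x) (right_mem_segment ℝ 0 x)
      rw [FR_zero, sub_zero, sub_zero] at hMVT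
      have : |FR m f L x| ≤ (∑ j, Cj j) * ‖x‖ ^ ((n : ℝ) + α) * ‖x‖ := by
        simpa using hMVT
      refine this.trans (le_of_eq ?_)
      rw [mul_assoc, ← Real.rpow_add_one (ne_of_gt hxpos)]
      congr 1
      push_cast
      ring


def N2 : E3 → ℝ := fun x => ∑ i, x i ^ 2

lemma N2_eq (x : E3) : N2 x = ‖x‖ ^ 2 := by
  rw [EuclideanSpace.norm_eq, Real.sq_sqrt (by positivity)]
  simp [N2, sq_abs]

lemma N2_pos {x : E3} (hx : x ≠ 0) : 0 < N2 x := by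
  rw [N2_eq]
  have : 0 < ‖x‖ := norm_pos_iff.mpr hx
  positivity

lemma N2_hasFDerivAt (x : E3) :
    HasFDerivAt N2 (∑ j, (2 * x j) • (EuclideanSpace.proj j : E3 →L[ℝ] ℝ)) x := by
  have h : ∀ j : Fin 3, HasFDerivAt (fun y : E3 => y j ^ 2)
      ((2 * x j) • (EuclideanSpace.proj j : E3 →L[ℝ] ℝ)) x := by
    intro j
    have := hasFDerivAt_pow_coord j 2 x
    simpa using this
  exact HasFDerivAt.fun_sum fun j _ => h j

def rho (u : ℤ) : E3 → ℝ := fun x => N2 x ^ ((u : ℝ) / 2)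

lemma rho_eq_norm (u : ℤ) {x : E3} (hx : x ≠ 0) : rho u x = ‖x‖ ^ (u : ℝ) := by
  unfold rho
  rw [N2_eq, ← Real.rpow_natCast ‖x‖ 2, ← Real.rpow_mul (norm_nonneg x),
    show ((2:ℕ):ℝ) * ((u:ℝ)/2) = (u:ℝ) by push_cast; ring]

lemma rho_nonneg (u : ℤ) (x : E3) : 0 ≤ rho u x :=
  Real.rpow_nonneg (by unfold N2; positivity) _

lemma rho_zero {u : ℤ} (hu : u ≠ 0) : rho u 0 = 0 := by
  unfold rho
  have : N2 (0 : E3) = 0 := by simp [N2]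
  rw [this, Real.zero_rpow]
  intro h
  have : (u : ℝ) = 0 := by field_simp at h; exact_mod_cast h
  exact hu (by exact_mod_cast this)

lemma rho_hasFDerivAt (u : ℤ) {x : E3} (hx : x ≠ 0) :
    HasFDerivAt (rho u)
      (((u : ℝ) / 2 * N2 x ^ ((u : ℝ) / 2 - 1)) •
        ∑ j, (2 * x j) • (EuclideanSpace.proj j : E3 →L[ℝ] ℝ)) x := by
  have hd : HasDerivAt (fun t : ℝ => t ^ ((u : ℝ) / 2))
      ((u : ℝ) / 2 * N2 x ^ ((u : ℝ) / 2 - 1)) (N2 x) :=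
    Real.hasDerivAt_rpow_const (Or.inl (N2_pos hx).ne')
  exact hd.comp_hasFDerivAt x (N2_hasFDerivAt x)

lemma rho_diff (u : ℤ) {x : E3} (hx : x ≠ 0) : DifferentiableAt ℝ (rho u) x :=
  (rho_hasFDerivAt u hx).differentiableAt

lemma pd_rho (u : ℤ) {x : E3} (hx : x ≠ 0) (j : Fin 3) :
    pd j (rho u) x = (u : ℝ) * x j * rho (u - 2) x := by
  rw [pd_of_hasFDerivAt (rho_hasFDerivAt u hx) j]
  have hproj : ∀ i k : Fin 3, (EuclideanSpace.proj i : E3 →L[ℝ] ℝ)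
      (EuclideanSpace.single k 1) = if k = i then 1 else 0 := by
    intro i k
    rw [show (EuclideanSpace.proj i : E3 →L[ℝ] ℝ) (EuclideanSpace.single k 1)
      = (EuclideanSpace.single k (1:ℝ) : E3) i from rfl, EuclideanSpace.single_apply]
    by_cases h : i = k <;> simp [h, eq_comm]
  rw [ContinuousLinearMap.smul_apply, ContinuousLinearMap.sum_apply]
  simp only [ContinuousLinearMap.smul_apply, hproj]
  rw [Finset.sum_eq_single j]
  · unfold rho
    have h2 : ((u : ℝ) - 2) / 2 = (u : ℝ) / 2 - 1 := by ring
    rw [show (((u - 2 : ℤ) : ℝ)) = (u : ℝ) - 2 by push_cast; ring, h2]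
    simp
    ring
  · intro i _ hij
    rw [if_neg (Ne.symm hij)]
    simp
  · intro h
    exact absurd (Finset.mem_univ j) h

lemma mono_mul_coord (δ : Fin 3 → ℕ) (j : Fin 3) (x : E3) :
    mono (Function.update δ j (δ j + 1)) x = mono δ x * x j := by
  unfold mono
  have hupd : (fun i => x i ^ (Function.update δ j (δ j + 1)) i)
      = Function.update (fun i => x i ^ δ i) j (x j ^ (δ j + 1)) := by
    funext i
    by_cases hij : i = j
    · subst hij; simp [Function.update_apply]
    · simp [hij, Function.update_apply]
  rw [hupd, Finset.prod_update_of_mem (Finset.mem_univ j),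
    Finset.prod_eq_prod_diff_singleton_mul (Finset.mem_univ j) (fun i => x i ^ δ i)]
  rw [pow_succ]
  ring

def Term (m : ℕ) (f : E3 → ℝ) (δ : Fin 3 → ℕ) (u : ℤ) (L : List (Fin 3)) : E3 → ℝ :=
  fun x => mono δ x * rho u x * FR m f L x

inductive Cls (m : ℕ) (f : E3 → ℝ) (s : ℤ) : ℤ → (E3 → ℝ) → Prop where
  | zero (w : ℤ) : Cls m f s w (fun _ => 0)
  | add {w : ℤ} {h₁ h₂ : E3 → ℝ} : Cls m f s w h₁ → Cls m f s w h₂ →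
      Cls m f s w (fun x => h₁ x + h₂ x)
  | smul (c : ℝ) {w : ℤ} {h : E3 → ℝ} : Cls m f s w h → Cls m f s w (fun x => c * h x)
  | term (δ : Fin 3 → ℕ) (u : ℤ) (L : List (Fin 3)) {w : ℤ}
      (hu : u ≤ -1)
      (hw : (∑ i, δ i : ℤ) + u + (m : ℤ) - L.length = w)
      (hlen : (L.length : ℤ) + w ≤ (m : ℤ) + s - 2) :
      Cls m f s w (Term m f δ u L)

lemma term_zero_val {m : ℕ} {f : E3 → ℝ} {δ : Fin 3 → ℕ} {u : ℤ} (hu : u ≤ -1)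
    (L : List (Fin 3)) : Term m f δ u L 0 = 0 := by
  unfold Term
  rw [rho_zero (by omega)]
  ring

lemma cls_zero_val {m : ℕ} {f : E3 → ℝ} {s : ℤ} {w : ℤ} {h : E3 → ℝ}
    (hc : Cls m f s w h) : h 0 = 0 := by
  induction hc with
  | zero => rfl
  | add _ _ ih₁ ih₂ => simp [ih₁, ih₂]
  | smul c _ ih => simp [ih]
  | term δ u L hu hw hlen => exact term_zero_val hu L

lemma cls_bound {a α : ℝ} {m : ℕ} {f : E3 → ℝ} {s : ℤ} (ha : 0 < a) (hα0 : 0 < α)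
    (hs : s ≤ 1)
    (hf : ContDiffOn ℝ (m : ℕ∞) f (Metric.ball 0 a))
    (hH : ∀ β : Fin 3 → ℕ, (∑ i, β i) = m →
      ∃ C : ℝ, ∀ x ∈ Metric.ball (0 : E3) a, ∀ y ∈ Metric.ball (0 : E3) a,
        |pdM β f x - pdM β f y| ≤ C * ‖x - y‖ ^ α)
    {w : ℤ} {h : E3 → ℝ} (hc : Cls m f s w h) (hw : -1 ≤ w) :
    ∃ C : ℝ, 0 ≤ C ∧ ∀ x ∈ Metric.ball (0 : E3) a, x ≠ 0 →
      |h x| ≤ C * ‖x‖ ^ ((w : ℝ) + α) := by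
  induction hc with
  | zero => exact ⟨0, le_refl 0, fun x _ _ => by simp⟩
  | add hc₁ hc₂ ih₁ ih₂ =>
      rename_i w' h₁ h₂
      obtain ⟨C₁, hC₁0, hC₁⟩ := ih₁ hw
      obtain ⟨C₂, hC₂0, hC₂⟩ := ih₂ hw
      refine ⟨C₁ + C₂, by linarith, fun x hx hx0 => ?_⟩
      calc |h₁ x + h₂ x| ≤ |h₁ x| + |h₂ x| := abs_add_le _ _
        _ ≤ C₁ * ‖x‖ ^ ((w':ℝ) + α) + C₂ * ‖x‖ ^ ((w':ℝ) + α) :=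
            add_le_add (hC₁ x hx hx0) (hC₂ x hx hx0)
        _ = (C₁ + C₂) * ‖x‖ ^ ((w':ℝ) + α) := by ring
  | smul c hc ih =>
      obtain ⟨C, hC0, hC⟩ := ih hw
      refine ⟨|c| * C, by positivity, fun x hx hx0 => ?_⟩
      rw [abs_mul, mul_assoc]
      exact mul_le_mul_of_nonneg_left (hC x hx hx0) (abs_nonneg c)
  | term δ u L hu hwt hlen =>
      rename_i w'
      have hLm : L.length ≤ m := by omega
      obtain ⟨C, hC0, hCb⟩ := FR_bound ha hα0 hf hH (m - L.length) L (by omega) (by omega)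
      refine ⟨C, hC0, fun x hx hx0 => ?_⟩
      have hxpos : (0:ℝ) < ‖x‖ := norm_pos_iff.mpr hx0
      unfold Term
      rw [abs_mul, abs_mul]
      have h1 : |mono δ x| ≤ ‖x‖ ^ ((∑ i, δ i : ℕ) : ℝ) := abs_mono_le δ x
      have h2 : |rho u x| = ‖x‖ ^ ((u : ℝ)) := by
        rw [abs_of_nonneg (rho_nonneg u x), rho_eq_norm u hx0]
      have h3 : |FR m f L x| ≤ C * ‖x‖ ^ (((m - L.length : ℕ) : ℝ) + α) := hCb x hx
      calc |mono δ x| * |rho u x| * |FR m f L x|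
          ≤ (‖x‖ ^ ((∑ i, δ i : ℕ) : ℝ) * ‖x‖ ^ ((u : ℝ))) *
            (C * ‖x‖ ^ (((m - L.length : ℕ) : ℝ) + α)) := by
            apply mul_le_mul
            · rw [h2]
              exact mul_le_mul_of_nonneg_right h1 (Real.rpow_nonneg hxpos.le _)
            · exact h3
            · exact abs_nonneg _
            · positivity
        _ = C * (‖x‖ ^ ((∑ i, δ i : ℕ) : ℝ) * ‖x‖ ^ ((u : ℝ)) *
              ‖x‖ ^ (((m - L.length : ℕ) : ℝ) + α)) := by ring
        _ = C * ‖x‖ ^ (((∑ i, δ i : ℕ) : ℝ) + (u : ℝ) + ((((m - L.length : ℕ)) : ℝ) + α)) := by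
            rw [← Real.rpow_add hxpos, ← Real.rpow_add hxpos]
        _ = C * ‖x‖ ^ ((w' : ℝ) + α) := by
            have hexp : ((∑ i, δ i : ℕ) : ℝ) + (u : ℝ) + ((((m - L.length : ℕ)) : ℝ) + α)
                = (w' : ℝ) + α := by
              have hcast := congrArg (Int.cast : ℤ → ℝ) hwt
              push_cast [Nat.cast_sub hLm] at hcast ⊢
              linarith
            rw [hexp]


lemma pd_zero_fn (j : Fin 3) (x : E3) : pd j (fun _ : E3 => (0:ℝ)) x = 0 := by
  simp [pd]

lemma pd_add {u v : E3 → ℝ} {x : E3} (hu : DifferentiableAt ℝ u x)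
    (hv : DifferentiableAt ℝ v x) (j : Fin 3) :
    pd j (fun y => u y + v y) x = pd j u x + pd j v x := by
  unfold pd
  rw [fderiv_fun_add hu hv]
  simp

lemma pd_mul {u v : E3 → ℝ} {x : E3} (hu : DifferentiableAt ℝ u x)
    (hv : DifferentiableAt ℝ v x) (j : Fin 3) :
    pd j (fun y => u y * v y) x = pd j u x * v x + u x * pd j v x := by
  unfold pd
  rw [fderiv_fun_mul hu hv]
  simp only [ContinuousLinearMap.add_apply, ContinuousLinearMap.smul_apply, smul_eq_mul]
  ring

lemma hasFDerivAt_zero_of_bound {h : E3 → ℝ} {a C p : ℝ} (ha : 0 < a)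
    (h0 : h 0 = 0) (hp : 1 < p)
    (hb : ∀ x ∈ Metric.ball (0:E3) a, x ≠ 0 → |h x| ≤ C * ‖x‖ ^ p) :
    HasFDerivAt h (0 : E3 →L[ℝ] ℝ) 0 := by
  rw [hasFDerivAt_iff_isLittleO_nhds_zero]
  rw [Asymptotics.isLittleO_iff]
  intro c hc
  have hT : Filter.Tendsto (fun z : E3 => ‖z‖ ^ (p - 1)) (nhds 0) (nhds 0) := by
    have h1 : Filter.Tendsto (fun z : E3 => ‖z‖) (nhds 0) (nhds 0) := tendsto_norm_zero
    have h2 : ContinuousAt (fun t : ℝ => t ^ (p - 1)) 0 :=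
      Real.continuousAt_rpow_const 0 (p - 1) (Or.inr (by linarith))
    have h3 := h2.tendsto.comp h1
    rwa [Real.zero_rpow (by linarith : p - 1 ≠ 0)] at h3
  have hev : ∀ᶠ z : E3 in nhds 0, ‖z‖ ^ (p - 1) < c / (|C| + 1) :=
    hT.eventually_lt_const (by positivity)
  filter_upwards [Metric.ball_mem_nhds (0:E3) ha, hev] with z hz hzev
  simp only [zero_add, h0, sub_zero, ContinuousLinearMap.zero_apply]
  by_cases hz0 : z = 0
  · simp [hz0, h0]
  have hzpos : (0:ℝ) < ‖z‖ := norm_pos_iff.mpr hz0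
  have hb1 : |h z| ≤ C * ‖z‖ ^ p := hb z hz hz0
  have hps : ‖z‖ ^ p = ‖z‖ ^ (p - 1) * ‖z‖ := by
    rw [← Real.rpow_add_one (ne_of_gt hzpos) (p - 1)]
    norm_num
  rw [Real.norm_eq_abs]
  calc |h z| ≤ C * (‖z‖ ^ (p - 1) * ‖z‖) := by rw [← hps]; exact hb1
    _ ≤ |C| * (‖z‖ ^ (p - 1) * ‖z‖) := by
        apply mul_le_mul_of_nonneg_right (le_abs_self C)
        positivity
    _ = |C| * ‖z‖ ^ (p - 1) * ‖z‖ := by ring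
    _ ≤ |C| * (c / (|C| + 1)) * ‖z‖ := by
        apply mul_le_mul_of_nonneg_right _ (norm_nonneg z)
        exact mul_le_mul_of_nonneg_left hzev.le (abs_nonneg C)
    _ ≤ c * ‖z‖ := by
        apply mul_le_mul_of_nonneg_right _ (norm_nonneg z)
        rw [div_eq_mul_inv, ← mul_assoc]
        have hC1 : (0:ℝ) < |C| + 1 := by positivity
        rw [mul_comm |C| c, mul_assoc]
        nth_rewrite 2 [← mul_one c]
        apply mul_le_mul_of_nonneg_left _ hc.le
        rw [← div_eq_mul_inv, div_le_one hC1]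
        linarith

lemma pd_term {a : ℝ} {m : ℕ} {f : E3 → ℝ} (ha : 0 < a)
    (hf : ContDiffOn ℝ (m : ℕ∞) f (Metric.ball 0 a))
    {δ : Fin 3 → ℕ} {u : ℤ} {L : List (Fin 3)} (hLm : L.length < m)
    {x : E3} (hx : x ∈ Metric.ball (0:E3) a) (hx0 : x ≠ 0) (j : Fin 3) :
    DifferentiableAt ℝ (Term m f δ u L) x ∧
      pd j (Term m f δ u L) x
        = (δ j : ℝ) * Term m f (Function.update δ j (δ j - 1)) u L x
          + ((u : ℝ) * Term m f (Function.update δ j (δ j + 1)) (u - 2) L x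
            + Term m f δ u (j :: L) x) := by
  have hm := mono_diff δ x
  have hr := rho_diff u hx0
  have hFRd := FR_diffAt hf hLm hx
  have hmr : DifferentiableAt ℝ (fun y => mono δ y * rho u y) x := hm.mul hr
  have hdiff : DifferentiableAt ℝ (Term m f δ u L) x := by
    have := hmr.mul hFRd
    exact this
  refine ⟨hdiff, ?_⟩
  have h1 : pd j (Term m f δ u L) x
      = pd j (fun y => mono δ y * rho u y) x * FR m f L x
        + (mono δ x * rho u x) * pd j (FR m f L) x := pd_mul hmr hFRd j
  have h2 : pd j (fun y => mono δ y * rho u y) x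
      = pd j (mono δ) x * rho u x + mono δ x * pd j (rho u) x := pd_mul hm hr j
  rw [h1, h2, pd_mono, pd_rho u hx0, pd_FR ha hf hLm hx]
  unfold Term
  rw [mono_mul_coord]
  ring

lemma cls_deriv {a α : ℝ} {m : ℕ} {f : E3 → ℝ} {s : ℤ} (ha : 0 < a) (hα0 : 0 < α)
    (hα1 : α < 1) (hs : s ≤ 1)
    (hf : ContDiffOn ℝ (m : ℕ∞) f (Metric.ball 0 a))
    (hH : ∀ β : Fin 3 → ℕ, (∑ i, β i) = m →
      ∃ C : ℝ, ∀ x ∈ Metric.ball (0 : E3) a, ∀ y ∈ Metric.ball (0 : E3) a,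
        |pdM β f x - pdM β f y| ≤ C * ‖x - y‖ ^ α)
    {w : ℤ} {h : E3 → ℝ} (hc : Cls m f s w h) (hw : 0 ≤ w) :
    ∃ h' : Fin 3 → (E3 → ℝ),
      (∀ j, Cls m f s (w - 1) (h' j)) ∧
      (∀ x ∈ Metric.ball (0:E3) a, x ≠ 0 →
        DifferentiableAt ℝ h x ∧ ∀ j, pd j h x = h' j x) ∧
      (1 ≤ w → DifferentiableAt ℝ h 0 ∧ ∀ j, pd j h 0 = h' j 0) := by
  induction hc with
  | zero w =>
      refine ⟨fun _ _ => 0, fun j => Cls.zero _, ?_, ?_⟩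
      · exact fun x _ _ => ⟨differentiableAt_const 0, fun j => pd_zero_fn j x⟩
      · exact fun _ => ⟨differentiableAt_const 0, fun j => pd_zero_fn j 0⟩
  | add hc₁ hc₂ ih₁ ih₂ =>
      rename_i w' h₁ h₂
      obtain ⟨g₁, hg₁c, hg₁d, hg₁z⟩ := ih₁ hw
      obtain ⟨g₂, hg₂c, hg₂d, hg₂z⟩ := ih₂ hw
      refine ⟨fun j x => g₁ j x + g₂ j x, fun j => Cls.add (hg₁c j) (hg₂c j), ?_, ?_⟩
      · intro x hx hx0
        obtain ⟨hd₁, hp₁⟩ := hg₁d x hx hx0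
        obtain ⟨hd₂, hp₂⟩ := hg₂d x hx hx0
        exact ⟨hd₁.add hd₂, fun j => by rw [pd_add hd₁ hd₂ j, hp₁ j, hp₂ j]⟩
      · intro hw1
        obtain ⟨hd₁, hp₁⟩ := hg₁z hw1
        obtain ⟨hd₂, hp₂⟩ := hg₂z hw1
        exact ⟨hd₁.add hd₂, fun j => by rw [pd_add hd₁ hd₂ j, hp₁ j, hp₂ j]⟩
  | smul c hc ih =>
      rename_i w' h₁
      obtain ⟨g, hgc, hgd, hgz⟩ := ih hw
      refine ⟨fun j x => c * g j x, fun j => Cls.smul c (hgc j), ?_, ?_⟩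
      · intro x hx hx0
        obtain ⟨hd, hp⟩ := hgd x hx hx0
        exact ⟨hd.const_mul c, fun j => by rw [pd_const_mul hd c j, hp j]⟩
      · intro hw1
        obtain ⟨hd, hp⟩ := hgz hw1
        exact ⟨hd.const_mul c, fun j => by rw [pd_const_mul hd c j, hp j]⟩
  | term δ u L hu hwt hlen =>
      rename_i w'
      have hm1 : 1 ≤ m := by omega
      have hLm : L.length < m := by omega
      set T₁ : Fin 3 → E3 → ℝ := fun j x =>
        if δ j = 0 then 0 else (δ j : ℝ) * Term m f (Function.update δ j (δ j - 1)) u L x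
        with hT₁
      refine ⟨fun j x => T₁ j x
        + ((u : ℝ) * Term m f (Function.update δ j (δ j + 1)) (u - 2) L x
          + Term m f δ u (j :: L) x), ?_, ?_, ?_⟩
      · intro j
        apply Cls.add
        · by_cases hδ : δ j = 0
          · have : T₁ j = fun _ => (0:ℝ) := by funext x; simp [hT₁, hδ]
            rw [this]
            exact Cls.zero _
          · have : T₁ j = fun x => (δ j : ℝ) *
                Term m f (Function.update δ j (δ j - 1)) u L x := by
              funext x; simp [hT₁, hδ]
            rw [this]
            refine Cls.smul _ (Cls.term _ _ _ hu ?_ (by omega))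
            have hδ1 : 1 ≤ ∑ i, δ i :=
              le_trans (Nat.pos_of_ne_zero hδ)
                (Finset.single_le_sum (fun i _ => Nat.zero_le _) (Finset.mem_univ j))
            have hsum := sum_update_sub δ j hδ
            have hszz : (∑ i, ((Function.update δ j (δ j - 1)) i : ℤ))
                = (∑ i, (δ i : ℤ)) - 1 := by
              have hc := congrArg (Nat.cast : ℕ → ℤ) hsum
              push_cast [Nat.cast_sub hδ1] at hc
              exact hc
            omega
        · apply Cls.add
          · refine Cls.smul _ (Cls.term _ _ _ (by omega) ?_ (by omega))
            have hsum := sum_update_add δ j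
            have hszz : (∑ i, ((Function.update δ j (δ j + 1)) i : ℤ))
                = (∑ i, (δ i : ℤ)) + 1 := by
              have hc := congrArg (Nat.cast : ℕ → ℤ) hsum
              push_cast at hc
              exact hc
            omega
          · refine Cls.term _ _ _ hu ?_ (by simp [List.length_cons]; omega)
            simp only [List.length_cons]
            push_cast
            omega
      · intro x hx hx0
        refine ⟨(pd_term ha hf hLm hx hx0 0).1, fun j => ?_⟩
        rw [(pd_term ha hf hLm hx hx0 j).2]
        have hif : T₁ j x = (δ j : ℝ) * Term m f (Function.update δ j (δ j - 1)) u L x := by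
          by_cases hδ : δ j = 0 <;> simp [hT₁, hδ]
        show _ = T₁ j x + _
        rw [hif]
      · intro hw1
        have hbound := cls_bound ha hα0 hs hf hH (Cls.term δ u L hu hwt hlen) (by omega)
        obtain ⟨C, hC0, hCb⟩ := hbound
        have hp1 : 1 < (w' : ℝ) + α := by
          have : (1:ℝ) ≤ (w' : ℝ) := by exact_mod_cast hw1
          linarith
        have hD0 : HasFDerivAt (Term m f δ u L) (0 : E3 →L[ℝ] ℝ) 0 :=
          hasFDerivAt_zero_of_bound ha (term_zero_val hu L) hp1 hCb
        refine ⟨hD0.differentiableAt, fun j => ?_⟩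
        rw [pd_of_hasFDerivAt hD0 j]
        simp only [ContinuousLinearMap.zero_apply]
        rw [term_zero_val (by omega : u - 2 ≤ -1), term_zero_val hu]
        have : T₁ j 0 = 0 := by
          by_cases hδ : δ j = 0 <;> simp [hT₁, hδ, term_zero_val hu]
        rw [this]
        ring


lemma tendsto_mul_norm_rpow (C p : ℝ) (hp : 0 < p) :
    Filter.Tendsto (fun z : E3 => C * ‖z‖ ^ p) (nhds 0) (nhds 0) := by
  have h1 : Filter.Tendsto (fun z : E3 => ‖z‖) (nhds 0) (nhds 0) := tendsto_norm_zero
  have h2 : ContinuousAt (fun t : ℝ => t ^ p) 0 :=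
    Real.continuousAt_rpow_const 0 p (Or.inr hp.le)
  have h3 := h2.tendsto.comp h1
  rw [Real.zero_rpow hp.ne'] at h3
  have h4 := h3.const_mul C
  rwa [mul_zero] at h4

section Main

variable {a α : ℝ} {m : ℕ} {f : E3 → ℝ} {s : ℤ}

variable (ha : 0 < a) (hα0 : 0 < α) (hα1 : α < 1) (hs : s ≤ 1)
  (hf : ContDiffOn ℝ (m : ℕ∞) f (Metric.ball 0 a))
  (hH : ∀ β : Fin 3 → ℕ, (∑ i, β i) = m →
    ∃ C : ℝ, ∀ x ∈ Metric.ball (0 : E3) a, ∀ y ∈ Metric.ball (0 : E3) a,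
      |pdM β f x - pdM β f y| ≤ C * ‖x - y‖ ^ α)

include ha hα0 hα1 hs hf hH

lemma cls_cont {ε : ℝ} (hε0 : 0 < ε) (hεa : ε ≤ a) {w : ℤ} {h : E3 → ℝ}
    (hc : Cls m f s w h) (hw : 0 ≤ w) : ContinuousOn h (Metric.ball 0 ε) := by
  obtain ⟨h', hcl, hd, hz⟩ := cls_deriv ha hα0 hα1 hs hf hH hc hw
  have hsub : Metric.ball (0:E3) ε ⊆ Metric.ball 0 a :=
    Metric.ball_subset_ball hεa
  intro x hx
  by_cases hx0 : x = 0
  · subst hx0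
    obtain ⟨C, hC0, hCb⟩ := cls_bound ha hα0 hs hf hH hc (by omega)
    have hwp : (0:ℝ) < (w:ℝ) + α := by
      have : (0:ℝ) ≤ (w:ℝ) := by exact_mod_cast hw
      linarith
    have hT : Filter.Tendsto h (nhds 0) (nhds 0) := by
      apply squeeze_zero_norm' _ (tendsto_mul_norm_rpow C ((w:ℝ) + α) hwp)
      filter_upwards [Metric.ball_mem_nhds (0:E3) ha] with z hz
      by_cases hz0 : z = 0
      · subst hz0
        rw [cls_zero_val hc]
        simp only [norm_zero, norm_zero]
        rw [Real.zero_rpow hwp.ne']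
        simp
      · exact hCb z hz hz0
    have : ContinuousAt h 0 := by
      unfold ContinuousAt
      rwa [cls_zero_val hc]
    exact this.continuousWithinAt
  · exact ((hd x (hsub hx) hx0).1.continuousAt).continuousWithinAt

lemma cls_contDiffOn {ε : ℝ} (hε0 : 0 < ε) (hεa : ε ≤ a) :
    ∀ (n : ℕ) {w : ℤ} {h : E3 → ℝ}, Cls m f s w h → w.toNat = n → 0 ≤ w →
      ContDiffOn ℝ (n : ℕ∞) h (Metric.ball 0 ε) := by
  intro n
  induction n with
  | zero =>
      intro w h hc _ hw
      exact contDiffOn_zero.mpr (cls_cont ha hα0 hα1 hs hf hH hε0 hεa hc hw)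
  | succ n ih =>
      intro w h hc hn hw
      have hw1 : 1 ≤ w := by omega
      obtain ⟨h', hcl, hd, hz⟩ := cls_deriv ha hα0 hα1 hs hf hH hc hw
      have hsub : Metric.ball (0:E3) ε ⊆ Metric.ball 0 a := Metric.ball_subset_ball hεa
      have hdiffAt : ∀ x ∈ Metric.ball (0:E3) ε, DifferentiableAt ℝ h x := by
        intro x hx
        by_cases hx0 : x = 0
        · subst hx0; exact (hz hw1).1
        · exact (hd x (hsub hx) hx0).1
      have hpdeq : ∀ x ∈ Metric.ball (0:E3) ε, ∀ j, pd j h x = h' j x := by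
        intro x hx j
        by_cases hx0 : x = 0
        · subst hx0; exact (hz hw1).2 j
        · exact (hd x (hsub hx) hx0).2 j
      have hkey : ContDiffOn ℝ ((n : ℕ∞) : WithTop ℕ∞) (fderiv ℝ h) (Metric.ball 0 ε) := by
        have hsum : ContDiffOn ℝ ((n : ℕ∞) : WithTop ℕ∞)
            (fun x => ∑ j, h' j x • (EuclideanSpace.proj j : E3 →L[ℝ] ℝ))
            (Metric.ball 0 ε) := by
          apply ContDiffOn.sum
          intro j _
          exact (ih (hcl j) (by omega) (by omega)).smul contDiffOn_const
        apply hsum.congr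
        intro x hx
        rw [clm_expand (fderiv ℝ h x)]
        refine Finset.sum_congr rfl fun j _ => ?_
        rw [show fderiv ℝ h x (EuclideanSpace.single j 1) = pd j h x from rfl,
          hpdeq x hx j]
      have hres := (contDiffOn_succ_iff_fderiv_of_isOpen (n := (n : ℕ∞))
        Metric.isOpen_ball).mpr
        ⟨fun x hx => (hdiffAt x hx).differentiableWithinAt, by simp, hkey⟩
      have hcast : (((n+1 : ℕ) : ℕ∞) : WithTop ℕ∞) = ((n : ℕ∞) : WithTop ℕ∞) + 1 := by
        push_cast
        rfl
      rw [show (((n+1:ℕ) : ℕ∞) : WithTop ℕ∞) = ((n : ℕ∞) : WithTop ℕ∞) + 1 from hcast]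
      exact hres

end Main


section Holder

variable {a α : ℝ} {m : ℕ} {f : E3 → ℝ} {s : ℤ}

variable (ha : 0 < a) (hα0 : 0 < α) (hα1 : α < 1) (hs : s ≤ 1)
  (hf : ContDiffOn ℝ (m : ℕ∞) f (Metric.ball 0 a))
  (hH : ∀ β : Fin 3 → ℕ, (∑ i, β i) = m →
    ∃ C : ℝ, ∀ x ∈ Metric.ball (0 : E3) a, ∀ y ∈ Metric.ball (0 : E3) a,
      |pdM β f x - pdM β f y| ≤ C * ‖x - y‖ ^ α)

include ha hα0 hα1 hs hf hH

lemma cls_holder_aux {ε : ℝ} (hε0 : 0 < ε) (hεa : ε ≤ a) {h : E3 → ℝ}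
    (hc : Cls m f s 0 h) :
    ∃ C : ℝ, 0 ≤ C ∧ ∀ x ∈ Metric.ball (0:E3) ε, ∀ y ∈ Metric.ball (0:E3) ε,
      ‖y‖ ≤ ‖x‖ → |h x - h y| ≤ C * ‖x - y‖ ^ α := by
  have hsub : Metric.ball (0:E3) ε ⊆ Metric.ball 0 a := Metric.ball_subset_ball hεa
  obtain ⟨C0, hC00, hB0⟩ := cls_bound ha hα0 hs hf hH hc (by norm_num)
  have hB : ∀ z ∈ Metric.ball (0:E3) a, |h z| ≤ C0 * ‖z‖ ^ α := by
    intro z hz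
    by_cases hz0 : z = 0
    · subst hz0
      rw [cls_zero_val hc]
      simp only [abs_zero, norm_zero]
      rw [Real.zero_rpow hα0.ne']
      simp
    · have := hB0 z hz hz0
      rwa [show ((0:ℤ):ℝ) + α = α by norm_num] at this
  obtain ⟨h', hcl, hd, _⟩ := cls_deriv ha hα0 hα1 hs hf hH hc le_rfl
  choose C1 hC10 hB1' using fun j =>
    cls_bound ha hα0 hs hf hH (hcl j) (by norm_num)
  have hB1 : ∀ j, ∀ z ∈ Metric.ball (0:E3) a, z ≠ 0 →
      |h' j z| ≤ C1 j * ‖z‖ ^ (α - 1) := by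
    intro j z hz hz0
    have := hB1' j z hz hz0
    rwa [show ((0 - 1 : ℤ):ℝ) + α = α - 1 by push_cast; ring] at this
  have hsC1' : (0:ℝ) ≤ ∑ j, C1 j := Finset.sum_nonneg fun j _ => hC10 j
  refine ⟨4 * C0 + ∑ j, C1 j, by linarith, ?_⟩
  intro x hx y hy hyx
  by_cases hx0 : x = 0
  · have hy0 : y = 0 := by
      rw [hx0, norm_zero] at hyx
      exact norm_le_zero_iff.mp hyx
    subst hx0; subst hy0
    simp only [sub_self, abs_zero, norm_zero]
    rw [Real.zero_rpow hα0.ne']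
    simp
  by_cases hxy : x = y
  · subst hxy
    simp only [sub_self, abs_zero, norm_zero]
    rw [Real.zero_rpow hα0.ne']
    simp
  have hxpos : (0:ℝ) < ‖x‖ := norm_pos_iff.mpr hx0
  have hxypos : (0:ℝ) < ‖x - y‖ := by
    rw [norm_pos_iff]
    exact sub_ne_zero.mpr hxy
  have hrpow_pos : (0:ℝ) < ‖x - y‖ ^ α := Real.rpow_pos_of_pos hxypos α
  by_cases hclose : ‖x - y‖ ≤ ‖x‖ / 2
  · -- near case: MVT on the segment [x,y]
    have hσball : segment ℝ x y ⊆ Metric.ball 0 ε :=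
      (convex_ball (0:E3) ε).segment_subset hx hy
    have hσn : ∀ z ∈ segment ℝ x y, ‖x‖ / 2 ≤ ‖z‖ := by
      intro z hz
      rw [segment_eq_image'] at hz
      obtain ⟨t, ht, rfl⟩ := hz
      have h1 : ‖t • (y - x)‖ ≤ ‖x - y‖ := by
        rw [norm_smul, Real.norm_eq_abs, abs_of_nonneg ht.1, ← norm_neg (y - x), neg_sub]
        calc t * ‖x - y‖ ≤ 1 * ‖x - y‖ :=
              mul_le_mul_of_nonneg_right ht.2 (norm_nonneg _)
          _ = ‖x - y‖ := one_mul _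
      have h5 : ‖(x + t • (y - x)) - (t • (y - x))‖ ≤ ‖x + t • (y - x)‖ + ‖t • (y - x)‖ :=
        norm_sub_le _ _
      have h6 : (x + t • (y - x)) - (t • (y - x)) = x := by abel
      rw [h6] at h5
      linarith
    have hMVT := Convex.norm_image_sub_le_of_norm_hasFDerivWithin_le
      (f := h)
      (f' := fun z => ∑ j, h' j z • (EuclideanSpace.proj j : E3 →L[ℝ] ℝ))
      (C := (∑ j, C1 j) * (‖x‖ / 2) ^ (α - 1))
      (fun z hz => by
        have hz0 : z ≠ 0 := by
          have h7 := hσn z hz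
          intro hzz; rw [hzz, norm_zero] at h7; linarith
        obtain ⟨hdz, hpz⟩ := hd z (hsub (hσball hz)) hz0
        have hde := hasFDerivAt_expand hdz
        have h8 : (∑ j, pd j h z • (EuclideanSpace.proj j : E3 →L[ℝ] ℝ))
            = ∑ j, h' j z • (EuclideanSpace.proj j : E3 →L[ℝ] ℝ) :=
          Finset.sum_congr rfl fun j _ => by rw [hpz j]
        rw [h8] at hde
        exact hde.hasFDerivWithinAt)
      (fun z hz => by
        have hz2 := hσn z hz
        have hzpos : (0:ℝ) < ‖z‖ := lt_of_lt_of_le (by positivity) hz2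
        have hz0 : z ≠ 0 := norm_pos_iff.mp hzpos
        refine (clm_norm_le _).trans ?_
        calc ∑ j, |h' j z| ≤ ∑ j, C1 j * ‖z‖ ^ (α - 1) :=
              Finset.sum_le_sum fun j _ => hB1 j z (hsub (hσball hz)) hz0
          _ ≤ ∑ j, C1 j * (‖x‖ / 2) ^ (α - 1) := by
              refine Finset.sum_le_sum fun j _ => mul_le_mul_of_nonneg_left ?_ (hC10 j)
              exact Real.rpow_le_rpow_of_nonpos (by positivity) hz2 (by linarith)
          _ = (∑ j, C1 j) * (‖x‖ / 2) ^ (α - 1) := by rw [Finset.sum_mul])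
      (convex_segment x y) (left_mem_segment ℝ x y) (right_mem_segment ℝ x y)
    have habs : |h x - h y| ≤ (∑ j, C1 j) * (‖x‖ / 2) ^ (α - 1) * ‖x - y‖ := by
      rw [abs_sub_comm]
      calc |h y - h x| = ‖h y - h x‖ := (Real.norm_eq_abs _).symm
        _ ≤ (∑ j, C1 j) * (‖x‖ / 2) ^ (α - 1) * ‖y - x‖ := hMVT
        _ = (∑ j, C1 j) * (‖x‖ / 2) ^ (α - 1) * ‖x - y‖ := by rw [norm_sub_rev]
    have hsplit : ‖x - y‖ = ‖x - y‖ ^ (1 - α) * ‖x - y‖ ^ α := by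
      rw [← Real.rpow_add hxypos]
      norm_num
    have hle2 : ‖x - y‖ ^ (1 - α) ≤ (‖x‖ / 2) ^ (1 - α) :=
      Real.rpow_le_rpow hxypos.le hclose (by linarith)
    have hxhalf : (0:ℝ) < ‖x‖/2 := by positivity
    have hsC1 : (0:ℝ) ≤ ∑ j, C1 j := Finset.sum_nonneg fun j _ => hC10 j
    calc |h x - h y|
        ≤ (∑ j, C1 j) * (‖x‖ / 2) ^ (α - 1) * (‖x - y‖ ^ (1-α) * ‖x-y‖ ^ α) := by
          rw [← hsplit]; exact habs
      _ ≤ (∑ j, C1 j) * (‖x‖ / 2) ^ (α - 1) * ((‖x‖/2) ^ (1-α) * ‖x-y‖ ^ α) := by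
          refine mul_le_mul_of_nonneg_left ?_
            (mul_nonneg hsC1 (Real.rpow_nonneg hxhalf.le _))
          exact mul_le_mul_of_nonneg_right hle2 hrpow_pos.le
      _ = (∑ j, C1 j) * ((‖x‖/2) ^ (α - 1) * (‖x‖/2) ^ (1-α)) * ‖x-y‖ ^ α := by ring
      _ = (∑ j, C1 j) * ‖x-y‖ ^ α := by
          rw [← Real.rpow_add hxhalf]
          norm_num
      _ ≤ (4 * C0 + ∑ j, C1 j) * ‖x-y‖ ^ α := by
          apply mul_le_mul_of_nonneg_right _ hrpow_pos.le
          linarith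
  · push_neg at hclose
    have hxb : ‖x‖ ≤ 2 * ‖x - y‖ := by linarith
    have h1 : |h x - h y| ≤ |h x| + |h y| := by
      calc |h x - h y| = ‖h x - h y‖ := (Real.norm_eq_abs _).symm
        _ ≤ ‖h x‖ + ‖h y‖ := norm_sub_le _ _
        _ = |h x| + |h y| := by rw [Real.norm_eq_abs, Real.norm_eq_abs]
    have h2 : |h y| ≤ C0 * ‖x‖ ^ α :=
      (hB y (hsub hy)).trans (mul_le_mul_of_nonneg_left
        (Real.rpow_le_rpow (norm_nonneg y) hyx hα0.le) hC00)
    have h3 : ‖x‖ ^ α ≤ 2 * ‖x-y‖ ^ α := by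
      calc ‖x‖ ^ α ≤ (2 * ‖x - y‖) ^ α :=
            Real.rpow_le_rpow (norm_nonneg x) hxb hα0.le
        _ = (2:ℝ) ^ α * ‖x - y‖ ^ α := Real.mul_rpow (by norm_num) hxypos.le
        _ ≤ 2 * ‖x - y‖ ^ α := by
            apply mul_le_mul_of_nonneg_right _ hrpow_pos.le
            have h4 := Real.rpow_le_rpow_of_exponent_le (by norm_num : (1:ℝ) ≤ 2) hα1.le
            rwa [Real.rpow_one] at h4
    have hsC1 : (0:ℝ) ≤ ∑ j, C1 j := Finset.sum_nonneg fun j _ => hC10 j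
    calc |h x - h y| ≤ |h x| + |h y| := h1
      _ ≤ C0 * ‖x‖ ^ α + C0 * ‖x‖ ^ α := add_le_add (hB x (hsub hx)) h2
      _ = 2 * C0 * ‖x‖ ^ α := by ring
      _ ≤ 2 * C0 * (2 * ‖x-y‖ ^ α) := by
          apply mul_le_mul_of_nonneg_left h3 (by positivity)
      _ = 4 * C0 * ‖x-y‖ ^ α := by ring
      _ ≤ (4 * C0 + ∑ j, C1 j) * ‖x-y‖ ^ α := by
          apply mul_le_mul_of_nonneg_right _ hrpow_pos.le
          linarith

lemma cls_holder {ε : ℝ} (hε0 : 0 < ε) (hεa : ε ≤ a) {h : E3 → ℝ}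
    (hc : Cls m f s 0 h) :
    ∃ C : ℝ, ∀ x ∈ Metric.ball (0:E3) ε, ∀ y ∈ Metric.ball (0:E3) ε,
      |h x - h y| ≤ C * ‖x - y‖ ^ α := by
  obtain ⟨C, hC0, hCb⟩ := cls_holder_aux ha hα0 hα1 hs hf hH hε0 hεa hc
  refine ⟨C, fun x hx y hy => ?_⟩
  rcases le_total ‖y‖ ‖x‖ with hle | hle
  · exact hCb x hx y hy hle
  · rw [abs_sub_comm, ← norm_neg (x - y), neg_sub]
    exact hCb y hy x hx hle

end Holder

end S7

open S7

/-- if `f ∈ C^{m,α}(B_a)`, `f_R = f − T_m(f)`, and `s ≤ 1` is an integer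
with `m + s − 1 ≥ 1`, then for every `0 < ε < a` the function equal to
`‖x‖^(s−2) f_R(x)` for `x ≠ 0` and to `0` at the origin belongs to
`C^{m+s−2,α}(B_ε)`. -/
theorem stmt_7 (a : ℝ) (ha : 0 < a) (α : ℝ) (hα0 : 0 < α) (hα1 : α < 1) (m : ℕ)
    (f : E3 → ℝ) (hf : HolderOn m α (Metric.ball 0 a) f)
    (s : ℤ) (hs : s ≤ 1) (hms : 1 ≤ (m : ℤ) + s - 1)
    (g : E3 → ℝ) (hg0 : g 0 = 0)
    (hg : ∀ x : E3, x ≠ 0 → g x = ‖x‖ ^ (s - 2) * (f x - taylorPoly m f x))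
    (ε : ℝ) (hε0 : 0 < ε) (hεa : ε < a) :
    HolderOn ((m : ℤ) + s - 2).toNat α (Metric.ball 0 ε) g := by
  obtain ⟨hfs, hfH⟩ := hf
  have hεa' : ε ≤ a := le_of_lt hεa
  set k : ℤ := (m:ℤ) + s - 2 with hk
  have hk0 : 0 ≤ k := by omega
  have hgt : g = Term m f 0 (s-2) [] := by
    funext x
    by_cases hx0 : x = 0
    · rw [hx0, hg0, term_zero_val (by omega) []]
    · rw [hg x hx0]
      show _ = Term m f 0 (s-2) [] x
      unfold Term FR
      rw [mono_zero_idx, rho_eq_norm _ hx0, pdList_nil, taylorPoly_eq_PL,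
        Real.rpow_intCast]
      ring
  have hgc : Cls m f s k g := by
    rw [hgt]
    refine Cls.term 0 (s-2) [] (by omega) ?_ ?_
    · simp [hk]
      ring
    · simp [hk]
  constructor
  · exact cls_contDiffOn ha hα0 hα1 hs hfs hfH hε0 hεa' (k.toNat) hgc rfl hk0
  · intro β hβ
    have main : ∀ L : List (Fin 3), (L.length : ℤ) ≤ k →
        ∃ h', Cls m f s (k - L.length) h' ∧
          ∀ x ∈ Metric.ball (0:E3) ε, pdList L g x = h' x := by
      intro L
      induction L with
      | nil => exact fun _ => ⟨g, by simpa using hgc, fun x _ => rfl⟩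
      | cons j t ih =>
          intro hlen
          have ht : (t.length : ℤ) ≤ k := by
            simp only [List.length_cons] at hlen
            push_cast at hlen ⊢
            omega
          obtain ⟨h', hcl', hagree⟩ := ih ht
          have hw1 : 1 ≤ k - (t.length : ℤ) := by
            simp only [List.length_cons] at hlen
            push_cast at hlen
            omega
          obtain ⟨d, hdcl, hdx, hd0⟩ := cls_deriv ha hα0 hα1 hs hfs hfH hcl' (by omega)
          refine ⟨d j, ?_, fun x hx => ?_⟩
          · have h9 := hdcl j
            have h10 : k - (((j :: t).length : ℕ) : ℤ) = k - (t.length : ℤ) - 1 := by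
              simp only [List.length_cons]
              push_cast
              ring
            rw [h10]
            exact h9
          · rw [pdList_cons, pd_congr Metric.isOpen_ball hagree hx j]
            by_cases hx0 : x = 0
            · subst hx0
              exact (hd0 hw1).2 j
            · exact (hdx x (Metric.ball_subset_ball hεa' hx) hx0).2 j
    have hklen : ((canon β).length : ℤ) = k := by
      rw [canon_length, hβ]
      exact Int.toNat_of_nonneg hk0
    obtain ⟨h', hcl, hagree⟩ := main (canon β) (le_of_eq hklen)
    have hw0 : k - ((canon β).length : ℤ) = 0 := by omega
    rw [hw0] at hcl
    obtain ⟨C, hCb⟩ := cls_holder ha hα0 hα1 hs hfs hfH hε0 hεa' hcl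
    refine ⟨C, fun x hx y hy => ?_⟩
    rw [pdM_eq_pdList, hagree x hx, hagree y hy]
    exact hCb x hx y hy
end
end

section
/- Let â^{ij}, b^i, c be smooth on B_a ⊂ ℝ³ with â^{ij}(x) = O(‖x‖²) as x → 0 and x_j â^{ij}(x) = 0 for all x ∈ B_a, and define L̂u = â^{ij} ∂_i∂_j u + b^i ∂_i u + c u. Let s ∈ ℤ, m ∈ ℕ, and p ∈ 𝒫_m. Then the function U defined on B_a \ {0} by U(x) = ‖x‖^{−s+2} · L̂(‖x‖^s p)(x) extends to a smooth function on B_a satisfying U(x) = O(‖x‖^{m+1}) as x → 0; if moreover b^i(x) = O(‖x‖) as x → 0, then U(x) = O(‖x‖^{m+2}). -/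
noncomputable section

/-- The operator `L̂u = âⁱʲ ∂ᵢ∂ⱼu + bⁱ ∂ᵢu + c u` on ℝ³. -/
def LhatOp (Ahat : Fin 3 → Fin 3 → E3 → ℝ) (b : Fin 3 → E3 → ℝ) (c : E3 → ℝ)
    (u : E3 → ℝ) (x : E3) : ℝ :=
  (∑ i, ∑ j, Ahat i j x * pd i (pd j u) x) + (∑ i, b i x * pd i u x) + c x * u x

open MvPolynomial Asymptotics Filter Finsupp

def pf (P : MvPolynomial (Fin 3) ℝ) : E3 → ℝ := fun x => MvPolynomial.eval (fun i => x i) P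

lemma pf_add (P Q) : pf (P + Q) = fun x => pf P x + pf Q x := by
  funext x; simp [pf]

lemma pf_mulX (P) (i : Fin 3) : pf (P * X i) = fun x => pf P x * x i := by
  funext x; simp [pf]

lemma contDiff_coord (i : Fin 3) : ContDiff ℝ (⊤ : ℕ∞) (fun x : E3 => x i) :=
  ((EuclideanSpace.proj i : E3 →L[ℝ] ℝ)).contDiff

lemma pf_contDiff (P : MvPolynomial (Fin 3) ℝ) : ContDiff ℝ (⊤ : ℕ∞) (pf P) := by
  induction P using MvPolynomial.induction_on with
  | C a => have : pf (C a) = fun _ => a := by funext x; simp [pf]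
           rw [this]; exact contDiff_const
  | add p q hp hq => rw [pf_add]; exact hp.add hq
  | mul_X p i hp => rw [pf_mulX]; exact hp.mul (contDiff_coord i)

def pCLM (P : MvPolynomial (Fin 3) ℝ) (x : E3) : E3 →L[ℝ] ℝ :=
  ∑ j, pf (pderiv j P) x • ((EuclideanSpace.proj j : E3 →L[ℝ] ℝ))

lemma pCLM_apply (P x) (y : E3) : pCLM P x y = ∑ j, pf (pderiv j P) x * y j := by
  simp [pCLM]

lemma pf_hasFDerivAt (P : MvPolynomial (Fin 3) ℝ) (x : E3) :
    HasFDerivAt (pf P) (pCLM P x) x := by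
  induction P using MvPolynomial.induction_on with
  | C a =>
      have h : pf (C a) = fun _ => a := by funext x; simp [pf]
      have h2 : pCLM (C a) x = 0 := by
        ext y; simp [pCLM_apply, pf]
      rw [h, h2]; exact hasFDerivAt_const _ _
  | add p q hp hq =>
      have h2 : pCLM (p + q) x = pCLM p x + pCLM q x := by
        ext y; simp [pCLM_apply, pf, Finset.sum_add_distrib, add_mul]
      rw [pf_add, h2]; exact hp.add hq
  | mul_X p i hp =>
      have hi : HasFDerivAt (fun y : E3 => y i)
          ((EuclideanSpace.proj i : E3 →L[ℝ] ℝ)) x :=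
        ((EuclideanSpace.proj i : E3 →L[ℝ] ℝ)).hasFDerivAt
      have := hp.mul hi
      rw [pf_mulX]
      refine this.congr_fderiv ?_
      ext y
      simp only [pCLM_apply, ContinuousLinearMap.add_apply, ContinuousLinearMap.smul_apply,
        ContinuousLinearMap.coe_smul', Pi.smul_apply, smul_eq_mul]
      have : ∀ j : Fin 3, pf (pderiv j (p * X i)) x
          = pf (pderiv j p) x * x i + pf p x * (if j = i then 1 else 0) := by
        intro j
        rw [pderiv_mul]
        by_cases h : j = i <;> simp [h, pf]
      simp only [this]
      rw [Fin.sum_univ_three, Fin.sum_univ_three]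
      fin_cases i <;> simp <;> ring

lemma proj_single (i j : Fin 3) :
    (EuclideanSpace.single i (1:ℝ)) j = if j = i then 1 else 0 := by
  rw [EuclideanSpace.single_apply]

lemma pd_pf (i : Fin 3) (P : MvPolynomial (Fin 3) ℝ) (x : E3) :
    pd i (pf P) x = pf (pderiv i P) x := by
  rw [pd, (pf_hasFDerivAt P x).fderiv, pCLM_apply]
  rw [Fin.sum_univ_three]
  fin_cases i <;> simp [proj_single]

lemma abs_coord_le (x : E3) (i : Fin 3) : |x i| ≤ ‖x‖ := by
  rw [EuclideanSpace.norm_eq]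
  have h1 : |x i| ^ 2 ≤ ∑ j, ‖x j‖ ^ 2 := by
    have := Finset.single_le_sum (f := fun j => ‖x j‖ ^ 2)
      (fun j _ => sq_nonneg _) (Finset.mem_univ i)
    simpa [Real.norm_eq_abs] using this
  calc |x i| = Real.sqrt (|x i| ^ 2) := by rw [Real.sqrt_sq (abs_nonneg _)]
  _ ≤ _ := Real.sqrt_le_sqrt h1

lemma pf_bound (q : MvPolynomial (Fin 3) ℝ) (k : ℕ)
    (hq : ∀ d ∈ q.support, k ≤ Finsupp.degree d) :
    ∃ C, ∀ x : E3, ‖x‖ ≤ 1 → |pf q x| ≤ C * ‖x‖ ^ k := by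
  refine ⟨∑ d ∈ q.support, |coeff d q|, fun x hx => ?_⟩
  rw [pf, eval_eq, Finset.sum_mul]
  refine (Finset.abs_sum_le_sum_abs _ _).trans (Finset.sum_le_sum fun d hd => ?_)
  rw [abs_mul]
  have h1 : |∏ i ∈ d.support, x i ^ d i| ≤ ‖x‖ ^ k := by
    rw [Finset.abs_prod]
    calc ∏ i ∈ d.support, |x i ^ d i| ≤ ∏ i ∈ d.support, ‖x‖ ^ d i := by
          refine Finset.prod_le_prod (fun i _ => abs_nonneg _) (fun i _ => ?_)
          rw [abs_pow]
          exact pow_le_pow_left₀ (abs_nonneg _) (abs_coord_le x i) _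
      _ = ‖x‖ ^ (Finsupp.degree d) := by rw [Finset.prod_pow_eq_pow_sum]; rfl
      _ ≤ ‖x‖ ^ k := pow_le_pow_of_le_one (norm_nonneg _) hx (hq d hd)
  calc |coeff d q| * |∏ i ∈ d.support, x i ^ d i| ≤ |coeff d q| * ‖x‖ ^ k :=
        mul_le_mul_of_nonneg_left h1 (abs_nonneg _)
    _ = _ := rfl

lemma deg3 (d : Fin 3 →₀ ℕ) : Finsupp.degree d = ∑ i : Fin 3, d i :=
  Finset.sum_subset (Finset.subset_univ _)
    (fun i _ hi => Finsupp.notMem_support_iff.mp hi)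

lemma supp_pderiv (q : MvPolynomial (Fin 3) ℝ) (k : ℕ) (i : Fin 3)
    (hq : ∀ d ∈ q.support, k ≤ Finsupp.degree d) :
    ∀ d ∈ (pderiv i q).support, k - 1 ≤ Finsupp.degree d := by
  intro d hd
  classical
  have hrw : pderiv i q = ∑ s ∈ q.support,
      monomial (s - Finsupp.single i 1) (coeff s q * s i) := by
    conv_lhs => rw [q.as_sum]
    rw [map_sum]
    exact Finset.sum_congr rfl fun s _ => pderiv_monomial
  rw [hrw] at hd
  obtain ⟨s, hs, hds⟩ := Finset.mem_biUnion.mp (MvPolynomial.support_sum hd)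
  have hsub := support_monomial_subset hds
  rw [Finset.mem_singleton] at hsub
  subst hsub
  have hks := hq s hs
  rw [deg3] at hks ⊢
  have happ : ∀ j : Fin 3, (s - Finsupp.single i 1 : Fin 3 →₀ ℕ) j = s j - Finsupp.single i 1 j :=
    fun j => Finsupp.tsub_apply s _ j
  have hsingle : ∀ j : Fin 3, Finsupp.single i (1:ℕ) j ≤ 1 := by
    intro j; rw [Finsupp.single_apply]; split <;> omega
  rw [Fin.sum_univ_three] at hks ⊢
  rw [happ 0, happ 1, happ 2]
  have e0 := hsingle 0; have e1 := hsingle 1; have e2 := hsingle 2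
  have esum : Finsupp.single i (1:ℕ) 0 + Finsupp.single i 1 1 + Finsupp.single i 1 2 = 1 := by
    fin_cases i <;> simp [Finsupp.single_apply]
  omega

lemma eventually_norm_le_one : ∀ᶠ x : E3 in nhds 0, ‖x‖ ≤ 1 := by
  filter_upwards [Metric.ball_mem_nhds (0:E3) one_pos] with x hx
  rw [Metric.mem_ball, dist_zero_right] at hx
  exact hx.le

lemma pf_isBigO (q : MvPolynomial (Fin 3) ℝ) (k : ℕ)
    (hq : ∀ d ∈ q.support, k ≤ Finsupp.degree d) :
    (pf q) =O[nhds (0:E3)] (fun x => ‖x‖ ^ k) := by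
  obtain ⟨C, hC⟩ := pf_bound q k hq
  refine IsBigO.of_bound C ?_
  filter_upwards [eventually_norm_le_one] with x hx
  calc ‖pf q x‖ = |pf q x| := rfl
    _ ≤ C * ‖x‖ ^ k := hC x hx
    _ ≤ C * ‖(‖x‖ ^ k)‖ := by
        rw [norm_pow, norm_norm]

lemma normpow_isBigO {j k : ℕ} (h : k ≤ j) :
    (fun x : E3 => ‖x‖ ^ j) =O[nhds (0:E3)] (fun x => ‖x‖ ^ k) := by
  refine IsBigO.of_bound 1 ?_
  filter_upwards [eventually_norm_le_one] with x hx
  simp only [norm_pow, norm_norm, one_mul]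
  exact pow_le_pow_of_le_one (norm_nonneg _) hx h

lemma weakO {f : E3 → ℝ} {j k : ℕ} (hf : f =O[nhds (0:E3)] (fun x => ‖x‖ ^ j)) (h : k ≤ j) :
    f =O[nhds (0:E3)] (fun x => ‖x‖ ^ k) := hf.trans (normpow_isBigO h)

lemma mulO {f g : E3 → ℝ} {j k : ℕ} (hf : f =O[nhds (0:E3)] (fun x => ‖x‖ ^ j))
    (hg : g =O[nhds (0:E3)] (fun x => ‖x‖ ^ k)) :
    (fun x => f x * g x) =O[nhds (0:E3)] (fun x => ‖x‖ ^ (j + k)) := by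
  have := hf.mul hg
  refine this.congr' (EventuallyEq.refl _ _) (Eventually.of_forall fun x => ?_)
  simp [pow_add]

lemma coord_isBigO (i : Fin 3) : (fun x : E3 => x i) =O[nhds (0:E3)] (fun x => ‖x‖ ^ 1) := by
  refine IsBigO.of_bound 1 (Eventually.of_forall fun x => ?_)
  simpa using abs_coord_le x i

lemma contO {f : E3 → ℝ} (hf : ContinuousAt f 0) :
    f =O[nhds (0:E3)] (fun x : E3 => ‖x‖ ^ 0) := by
  have h1 : f =O[nhds (0:E3)] (fun _ => (1:ℝ)) := hf.isBigO_one ℝ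
  refine h1.congr' (EventuallyEq.refl _ _) (Eventually.of_forall fun x => ?_)
  simp

def NP : MvPolynomial (Fin 3) ℝ := ∑ i, X i ^ 2

lemma pf_NP (x : E3) : pf NP x = ∑ i, (x i) ^ 2 := by
  simp [pf, NP]

lemma pf_NP_eq_norm_sq (x : E3) : pf NP x = ‖x‖ ^ 2 := by
  rw [pf_NP, EuclideanSpace.norm_eq, Real.sq_sqrt (by positivity)]
  exact Finset.sum_congr rfl fun i _ => by rw [Real.norm_eq_abs, sq_abs]

lemma pf_NP_pos {x : E3} (hx : x ≠ 0) : 0 < pf NP x := by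
  rw [pf_NP_eq_norm_sq]
  have h : 0 < ‖x‖ := norm_pos_iff.mpr hx
  positivity

lemma sqrt_pf_NP (x : E3) : Real.sqrt (pf NP x) = ‖x‖ := by
  rw [pf_NP_eq_norm_sq, Real.sqrt_sq (norm_nonneg _)]

lemma pderiv_NP (j : Fin 3) : pderiv j NP = 2 * X j := by
  rw [NP, map_sum]
  rw [Fin.sum_univ_three]
  fin_cases j <;> simp [pderiv_pow] <;> ring

/-- Norm to an integer power has a derivative away from the origin. -/
lemma norm_zpow_hasFDerivAt (k : ℤ) {x : E3} (hx : x ≠ 0) :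
    HasFDerivAt (fun y : E3 => ‖y‖ ^ k)
      (((k : ℝ) * ‖x‖ ^ (k - 2) / 2) • pCLM NP x) x := by
  have hfun : (fun y : E3 => ‖y‖ ^ k) = (fun t : ℝ => Real.sqrt t ^ k) ∘ pf NP := by
    funext y; simp [Function.comp, sqrt_pf_NP]
  have hnx : ‖x‖ ≠ 0 := norm_ne_zero_iff.mpr hx
  have h1 : HasDerivAt Real.sqrt (1 / (2 * Real.sqrt (pf NP x))) (pf NP x) :=
    Real.hasDerivAt_sqrt (pf_NP_pos hx).ne'
  have h2 : HasDerivAt (fun t : ℝ => t ^ k)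
      ((k : ℝ) * (Real.sqrt (pf NP x)) ^ (k - 1)) (Real.sqrt (pf NP x)) :=
    hasDerivAt_zpow k _ (Or.inl (by rw [sqrt_pf_NP]; exact hnx))
  have h3 : HasDerivAt (fun t : ℝ => Real.sqrt t ^ k)
      ((k : ℝ) * (Real.sqrt (pf NP x)) ^ (k - 1) * (1 / (2 * Real.sqrt (pf NP x))))
      (pf NP x) := h2.comp _ h1
  have h4 := h3.comp_hasFDerivAt x (pf_hasFDerivAt NP x)
  rw [hfun]
  refine h4.congr_fderiv ?_
  congr 1
  rw [sqrt_pf_NP]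
  rw [show (k:ℝ) * ‖x‖ ^ (k-1) * (1/(2*‖x‖)) = (k:ℝ) * (‖x‖^(k-1) * ‖x‖⁻¹) * 2⁻¹ by ring]
  rw [← zpow_neg_one ‖x‖, ← zpow_add₀ hnx]
  rw [show k - 1 + -1 = k - 2 by ring]
  ring

def ND (k : ℤ) (q : MvPolynomial (Fin 3) ℝ) (x : E3) : E3 →L[ℝ] ℝ :=
  (‖x‖ ^ k) • pCLM q x + pf q x • (((k : ℝ) * ‖x‖ ^ (k - 2) / 2) • pCLM NP x)

lemma npf_hasFDerivAt (k : ℤ) (q : MvPolynomial (Fin 3) ℝ) {x : E3} (hx : x ≠ 0) :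
    HasFDerivAt (fun y : E3 => ‖y‖ ^ k * pf q y) (ND k q x) x := by
  have := (norm_zpow_hasFDerivAt k hx).mul (pf_hasFDerivAt q x)
  exact this

lemma pCLM_single (q : MvPolynomial (Fin 3) ℝ) (x : E3) (i : Fin 3) :
    pCLM q x (EuclideanSpace.single i 1) = pf (pderiv i q) x := by
  rw [pCLM_apply, Fin.sum_univ_three]
  fin_cases i <;> simp [proj_single]

lemma ND_single (k : ℤ) (q : MvPolynomial (Fin 3) ℝ) (x : E3) (i : Fin 3) :
    ND k q x (EuclideanSpace.single i 1)
      = ‖x‖ ^ k * pf (pderiv i q) x + pf q x * ((k : ℝ) * ‖x‖ ^ (k - 2)) * x i := by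
  have hNP : pf (pderiv i NP) x = 2 * x i := by
    rw [pderiv_NP]; simp [pf]
  simp only [ND, ContinuousLinearMap.add_apply, ContinuousLinearMap.smul_apply, smul_eq_mul,
    pCLM_single, hNP]
  ring

lemma pd_npf {x : E3} (hx : x ≠ 0) (k : ℤ) (q : MvPolynomial (Fin 3) ℝ) (i : Fin 3) :
    pd i (fun y : E3 => ‖y‖ ^ k * pf q y) x
      = ‖x‖ ^ k * pf (pderiv i q) x + pf q x * ((k : ℝ) * ‖x‖ ^ (k - 2)) * x i := by
  rw [pd, (npf_hasFDerivAt k q hx).fderiv, ND_single]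

lemma pf_Xmul (j : Fin 3) (P : MvPolynomial (Fin 3) ℝ) (y : E3) :
    pf (X j * P) y = y j * pf P y := by simp [pf]

lemma pd_pd_npf {x : E3} (hx : x ≠ 0) (s : ℤ) (P : MvPolynomial (Fin 3) ℝ) (i j : Fin 3) :
    pd i (pd j (fun y : E3 => ‖y‖ ^ s * pf P y)) x
      = (s:ℝ) * (‖x‖ ^ (s-2) * pf (pderiv i (X j * P)) x
          + pf (X j * P) x * (((s:ℝ) - 2) * ‖x‖ ^ (s - 4)) * x i)
        + (‖x‖ ^ s * pf (pderiv i (pderiv j P)) x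
          + pf (pderiv j P) x * ((s:ℝ) * ‖x‖ ^ (s - 2)) * x i) := by
  set F : E3 → ℝ := fun y =>
    (s:ℝ) * (‖y‖ ^ (s-2) * pf (X j * P) y) + ‖y‖ ^ s * pf (pderiv j P) y with hF
  have hev : pd j (fun y : E3 => ‖y‖ ^ s * pf P y) =ᶠ[nhds x] F := by
    have hopen : {y : E3 | y ≠ 0} ∈ nhds x := by
      exact IsOpen.mem_nhds isOpen_compl_singleton hx
    filter_upwards [hopen] with y hy
    rw [pd_npf hy s P j, hF]
    simp only [pf_Xmul]
    ring
  have hFd : HasFDerivAt F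
      ((s:ℝ) • ND (s-2) (X j * P) x + ND s (pderiv j P) x) x := by
    exact ((npf_hasFDerivAt (s-2) (X j * P) hx).const_mul (s:ℝ)).add
      (npf_hasFDerivAt s (pderiv j P) hx)
  rw [pd, hev.fderiv_eq, hFd.fderiv]
  simp only [ContinuousLinearMap.add_apply, ContinuousLinearMap.smul_apply, smul_eq_mul,
    ND_single]
  rw [show s - 2 - 2 = s - 4 by ring]
  push_cast
  ring

def Kt (s : ℤ) (P : MvPolynomial (Fin 3) ℝ) (i j : Fin 3) : E3 → ℝ := fun x =>
  (s:ℝ) * ((if i = j then (1:ℝ) else 0) * pf P x + x i * pf (pderiv j P) x)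
    + pf NP x * pf (pderiv i (pderiv j P)) x

def Bt (s : ℤ) (P : MvPolynomial (Fin 3) ℝ) (i : Fin 3) : E3 → ℝ := fun x =>
  (s:ℝ) * (x i * pf P x) + pf NP x * pf (pderiv i P) x

def Ufun (Ahat : Fin 3 → Fin 3 → E3 → ℝ) (b : Fin 3 → E3 → ℝ) (c : E3 → ℝ)
    (s : ℤ) (P : MvPolynomial (Fin 3) ℝ) : E3 → ℝ := fun x =>
  (∑ i, ∑ j, Ahat i j x * Kt s P i j x) + (∑ i, b i x * Bt s P i x)
    + c x * (pf NP x * pf P x)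

lemma pf_pderiv_Xmul (i j : Fin 3) (P : MvPolynomial (Fin 3) ℝ) (x : E3) :
    pf (pderiv i (X j * P)) x
      = (if i = j then (1:ℝ) else 0) * pf P x + x j * pf (pderiv i P) x := by
  rw [pderiv_mul]
  by_cases h : i = j <;> simp [pf, h, Pi.single_apply]

lemma Ufun_eq (Ahat : Fin 3 → Fin 3 → E3 → ℝ) (b : Fin 3 → E3 → ℝ) (c : E3 → ℝ)
    (s : ℤ) (P : MvPolynomial (Fin 3) ℝ) {x : E3} (hx : x ≠ 0)
    (hnorm : ∀ i, ∑ j, x j * Ahat i j x = 0) :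
    Ufun Ahat b c s P x
      = ‖x‖ ^ (-s + 2) * LhatOp Ahat b c (fun y => ‖y‖ ^ s * pf P y) x := by
  have hnx : ‖x‖ ≠ 0 := norm_ne_zero_iff.mpr hx
  have hz1 : ‖x‖ ^ (-s + 2) * ‖x‖ ^ (s - 2) = 1 := by
    rw [← zpow_add₀ hnx, show -s + 2 + (s - 2) = 0 by ring, zpow_zero]
  have hz2 : ‖x‖ ^ (-s + 2) * ‖x‖ ^ s = pf NP x := by
    rw [← zpow_add₀ hnx, show -s + 2 + s = 2 by ring, pf_NP_eq_norm_sq]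
    norm_cast
  have hz3 : ‖x‖ ^ (-s + 2) * ‖x‖ ^ (s - 4) = (‖x‖ ^ (2:ℤ))⁻¹ := by
    rw [← zpow_add₀ hnx, show -s + 2 + (s - 4) = -2 by ring, zpow_neg]
  set G : Fin 3 → ℝ := fun i =>
    (s:ℝ) * pf (pderiv i P) x
      + (s:ℝ) * ((s:ℝ) - 2) * (‖x‖ ^ (2:ℤ))⁻¹ * x i * pf P x with hG
  have hcell : ∀ i j : Fin 3,
      ‖x‖ ^ (-s + 2) * pd i (pd j (fun y : E3 => ‖y‖ ^ s * pf P y)) x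
        = Kt s P i j x + x j * G i := by
    intro i j
    rw [pd_pd_npf hx s P i j, pf_pderiv_Xmul, pf_Xmul, hG]
    simp only [Kt]
    push_cast
    linear_combination
      ((s:ℝ) * ((if i = j then (1:ℝ) else 0) * pf P x + x j * pf (pderiv i P) x)
        + pf (pderiv j P) x * (s:ℝ) * x i) * hz1
      + pf (pderiv i (pderiv j P)) x * hz2
      + ((s:ℝ) * (x j * pf P x) * ((s:ℝ) - 2) * x i) * hz3
  have hb1 : ∀ i : Fin 3,
      ‖x‖ ^ (-s + 2) * pd i (fun y : E3 => ‖y‖ ^ s * pf P y) x = Bt s P i x := by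
    intro i
    rw [pd_npf hx s P i]
    simp only [Bt]
    linear_combination pf (pderiv i P) x * hz2 + pf P x * (s:ℝ) * x i * hz1
  rw [LhatOp, Ufun, mul_add, mul_add]
  congr 1
  · congr 1
    · -- the second order terms
      rw [Finset.mul_sum]
      refine Finset.sum_congr rfl fun i _ => ?_
      rw [Finset.mul_sum]
      have : ∀ j, ‖x‖ ^ (-s + 2) * (Ahat i j x * pd i (pd j (fun y : E3 => ‖y‖ ^ s * pf P y)) x)
          = Ahat i j x * Kt s P i j x + (x j * Ahat i j x) * G i := by
        intro j
        rw [show ‖x‖ ^ (-s + 2) * (Ahat i j x * pd i (pd j (fun y : E3 => ‖y‖ ^ s * pf P y)) x)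
          = Ahat i j x * (‖x‖ ^ (-s + 2) * pd i (pd j (fun y : E3 => ‖y‖ ^ s * pf P y)) x) by ring]
        rw [hcell i j]
        ring
      simp only [this]
      rw [Finset.sum_add_distrib]
      have h0 : ∑ j, (x j * Ahat i j x) * G i = (∑ j, x j * Ahat i j x) * G i := by
        rw [Finset.sum_mul]
      rw [h0, hnorm i, zero_mul, add_zero]
    · -- first order terms
      rw [Finset.mul_sum]
      refine Finset.sum_congr rfl fun i _ => ?_
      rw [show ‖x‖ ^ (-s + 2) * (b i x * pd i (fun y : E3 => ‖y‖ ^ s * pf P y) x)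
        = b i x * (‖x‖ ^ (-s + 2) * pd i (fun y : E3 => ‖y‖ ^ s * pf P y) x) by ring]
      rw [hb1 i]
  · -- zeroth order term
    rw [show ‖x‖ ^ (-s + 2) * (c x * (‖x‖ ^ s * pf P x))
      = c x * ((‖x‖ ^ (-s + 2) * ‖x‖ ^ s) * pf P x) by ring]
    rw [hz2]

lemma Kt_contDiff (s : ℤ) (P : MvPolynomial (Fin 3) ℝ) (i j : Fin 3) :
    ContDiff ℝ (⊤ : ℕ∞) (Kt s P i j) := by
  refine ContDiff.add (contDiff_const.mul (ContDiff.add ?_ ?_)) ?_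
  · exact contDiff_const.mul (pf_contDiff P)
  · exact (contDiff_coord i).mul (pf_contDiff _)
  · exact (pf_contDiff NP).mul (pf_contDiff _)

lemma Bt_contDiff (s : ℤ) (P : MvPolynomial (Fin 3) ℝ) (i : Fin 3) :
    ContDiff ℝ (⊤ : ℕ∞) (Bt s P i) := by
  refine ContDiff.add (contDiff_const.mul ?_) ?_
  · exact (contDiff_coord i).mul (pf_contDiff P)
  · exact (pf_contDiff NP).mul (pf_contDiff _)

lemma Ufun_contDiffOn (Ahat : Fin 3 → Fin 3 → E3 → ℝ) (b : Fin 3 → E3 → ℝ) (c : E3 → ℝ)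
    (s : ℤ) (P : MvPolynomial (Fin 3) ℝ) {t : Set E3}
    (hA : ∀ i j, ContDiffOn ℝ (⊤ : ℕ∞) (Ahat i j) t)
    (hb : ∀ i, ContDiffOn ℝ (⊤ : ℕ∞) (b i) t)
    (hc : ContDiffOn ℝ (⊤ : ℕ∞) c t) :
    ContDiffOn ℝ (⊤ : ℕ∞) (Ufun Ahat b c s P) t := by
  refine ContDiffOn.add (ContDiffOn.add ?_ ?_) ?_
  · refine ContDiffOn.sum fun i _ => ContDiffOn.sum fun j _ => ?_
    exact (hA i j).mul (Kt_contDiff s P i j).contDiffOn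
  · refine ContDiffOn.sum fun i _ => ?_
    exact (hb i).mul (Bt_contDiff s P i).contDiffOn
  · exact hc.mul ((pf_contDiff NP).mul (pf_contDiff P)).contDiffOn

lemma NP_isBigO : (pf NP) =O[nhds (0:E3)] (fun x => ‖x‖ ^ 2) := by
  refine IsBigO.of_bound 1 (Eventually.of_forall fun x => ?_)
  rw [pf_NP_eq_norm_sq]
  simp

lemma Kt_isBigO (s : ℤ) (P : MvPolynomial (Fin 3) ℝ) (m : ℕ)
    (hP : ∀ d ∈ P.support, m ≤ Finsupp.degree d) (i j : Fin 3) :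
    (Kt s P i j) =O[nhds (0:E3)] (fun x => ‖x‖ ^ m) := by
  have hP1 : ∀ k : Fin 3, ∀ d ∈ (pderiv k P).support, m - 1 ≤ Finsupp.degree d :=
    fun k => supp_pderiv P m k hP
  have hP2 : ∀ d ∈ (pderiv i (pderiv j P)).support, m - 2 ≤ Finsupp.degree d := by
    have := supp_pderiv (pderiv j P) (m - 1) i (hP1 j)
    simpa [Nat.sub_sub] using this
  have t1 : (fun x : E3 => (if i = j then (1:ℝ) else 0) * pf P x)
      =O[nhds (0:E3)] (fun x => ‖x‖ ^ m) := (pf_isBigO P m hP).const_mul_left _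
  have t2 : (fun x : E3 => x i * pf (pderiv j P) x) =O[nhds (0:E3)]
      (fun x => ‖x‖ ^ m) :=
    weakO (mulO (coord_isBigO i) (pf_isBigO _ (m-1) (hP1 j))) (by omega)
  have t3 : (fun x : E3 => pf NP x * pf (pderiv i (pderiv j P)) x) =O[nhds (0:E3)]
      (fun x => ‖x‖ ^ m) :=
    weakO (mulO NP_isBigO (pf_isBigO _ (m-2) hP2)) (by omega)
  exact ((t1.add t2).const_mul_left _).add t3

lemma Bt_isBigO (s : ℤ) (P : MvPolynomial (Fin 3) ℝ) (m : ℕ)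
    (hP : ∀ d ∈ P.support, m ≤ Finsupp.degree d) (i : Fin 3) :
    (Bt s P i) =O[nhds (0:E3)] (fun x => ‖x‖ ^ (m + 1)) := by
  have hP1 : ∀ d ∈ (pderiv i P).support, m - 1 ≤ Finsupp.degree d :=
    supp_pderiv P m i hP
  have t1 : (fun x : E3 => x i * pf P x) =O[nhds (0:E3)] (fun x => ‖x‖ ^ (m+1)) := by
    have := mulO (coord_isBigO i) (pf_isBigO P m hP)
    exact weakO this (by omega)
  have t2 : (fun x : E3 => pf NP x * pf (pderiv i P) x) =O[nhds (0:E3)]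
      (fun x => ‖x‖ ^ (m+1)) :=
    weakO (mulO NP_isBigO (pf_isBigO _ (m-1) hP1)) (by omega)
  exact (t1.const_mul_left _).add t2

lemma Ufun_isBigO (Ahat : Fin 3 → Fin 3 → E3 → ℝ) (b : Fin 3 → E3 → ℝ) (c : E3 → ℝ)
    (s : ℤ) (P : MvPolynomial (Fin 3) ℝ) (m kb : ℕ) (hkb : kb ≤ 1)
    (hP : ∀ d ∈ P.support, m ≤ Finsupp.degree d)
    (hAO : ∀ i j, (Ahat i j) =O[nhds (0:E3)] (fun x => ‖x‖ ^ 2))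
    (hbO : ∀ i, (b i) =O[nhds (0:E3)] (fun x => ‖x‖ ^ kb))
    (hcO : c =O[nhds (0:E3)] (fun x => ‖x‖ ^ 0)) :
    (Ufun Ahat b c s P) =O[nhds (0:E3)] (fun x => ‖x‖ ^ (kb + m + 1)) := by
  refine IsBigO.add (IsBigO.add ?_ ?_) ?_
  · refine IsBigO.fun_sum fun i _ => IsBigO.fun_sum fun j _ => ?_
    exact weakO (mulO (hAO i j) (Kt_isBigO s P m hP i j)) (by omega)
  · refine IsBigO.fun_sum fun i _ => ?_
    exact weakO (mulO (hbO i) (Bt_isBigO s P m hP i)) (by omega)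
  · exact weakO (mulO hcO (mulO NP_isBigO (pf_isBigO P m hP))) (by omega)

/-- with `â, b, c` smooth on `B_a`, `âⁱʲ = O(‖x‖²)` at the origin and
`xⱼ âⁱʲ = 0` on `B_a`, for any `s ∈ ℤ` and homogeneous polynomial `p` of degree
`m`, the function `U = ‖x‖^(−s+2) L̂(‖x‖^s p)` on `B_a \\ {0}` extends smoothly to
`B_a` with `U = O(‖x‖^(m+1))`; if moreover `bⁱ = O(‖x‖)`, then
`U = O(‖x‖^(m+2))`. -/
theorem stmt_14 (a : ℝ) (ha : 0 < a)
    (Ahat : Fin 3 → Fin 3 → E3 → ℝ) (b : Fin 3 → E3 → ℝ) (c : E3 → ℝ)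
    (hA : ∀ i j, ContDiffOn ℝ (⊤ : ℕ∞) (Ahat i j) (Metric.ball 0 a))
    (hb : ∀ i, ContDiffOn ℝ (⊤ : ℕ∞) (b i) (Metric.ball 0 a))
    (hc : ContDiffOn ℝ (⊤ : ℕ∞) c (Metric.ball 0 a))
    (hhatO : ∀ i j, Asymptotics.IsBigO (nhds (0 : E3)) (Ahat i j) fun x => ‖x‖ ^ 2)
    (hnorm : ∀ i, ∀ x ∈ Metric.ball (0 : E3) a, ∑ j, x j * Ahat i j x = 0)
    (s : ℤ) (m : ℕ) (p : E3 → ℝ) (hp : IsHomogPoly m p) :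
    ∃ U : E3 → ℝ, ContDiffOn ℝ (⊤ : ℕ∞) U (Metric.ball 0 a) ∧
      (∀ x ∈ Metric.ball (0 : E3) a, x ≠ 0 →
        U x = ‖x‖ ^ (-s + 2) * LhatOp Ahat b c (fun y => ‖y‖ ^ s * p y) x) ∧
      Asymptotics.IsBigO (nhds (0 : E3)) U (fun x => ‖x‖ ^ (m + 1)) ∧
      ((∀ i, Asymptotics.IsBigO (nhds (0 : E3)) (b i) fun x => ‖x‖) →
        Asymptotics.IsBigO (nhds (0 : E3)) U fun x => ‖x‖ ^ (m + 2)) := by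
  obtain ⟨P, hPh, hPe⟩ := hp
  have hpeq : p = pf P := funext hPe
  subst hpeq
  have hPsupp : ∀ d ∈ P.support, m ≤ Finsupp.degree d := by
    intro d hd
    have h1 := hPh (MvPolynomial.mem_support_iff.mp hd)
    rw [← h1, Finsupp.degree_eq_weight_one]
    exact le_rfl
  have hcO : c =O[nhds (0:E3)] (fun x : E3 => ‖x‖ ^ 0) := by
    refine contO ?_
    exact hc.continuousOn.continuousAt (Metric.isOpen_ball.mem_nhds (Metric.mem_ball_self ha))
  refine ⟨Ufun Ahat b c s P, Ufun_contDiffOn Ahat b c s P hA hb hc, ?_, ?_, ?_⟩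
  · intro x hxball hx0
    exact Ufun_eq Ahat b c s P hx0 (fun i => hnorm i x hxball)
  · have hbO : ∀ i, (b i) =O[nhds (0:E3)] (fun x : E3 => ‖x‖ ^ 0) := by
      intro i
      refine contO ?_
      exact (hb i).continuousOn.continuousAt
        (Metric.isOpen_ball.mem_nhds (Metric.mem_ball_self ha))
    have := Ufun_isBigO Ahat b c s P m 0 (by norm_num) hPsupp hhatO hbO hcO
    simpa using this
  · intro hbO'
    have hbO : ∀ i, (b i) =O[nhds (0:E3)] (fun x : E3 => ‖x‖ ^ 1) := by
      intro i
      refine (hbO' i).congr' (Filter.EventuallyEq.refl _ _)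
        (Filter.Eventually.of_forall fun x => ?_)
      simp
    have := Ufun_isBigO Ahat b c s P m 1 le_rfl hPsupp hhatO hbO hcO
    have h12 : 1 + m + 1 = m + 2 := by omega
    rw [h12] at this
    exact this
end
end
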